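/- arXiv:1906.05908 — 9 statements merged into one kernel-verified Lean document; each statement's English description precedes it below -/
import Mathlib

section
/- For every even n there exists a 3-regular graph on 2n vertices having exactly 2^(n/2)+1 perfect matchings, one of which is edge-disjoint from all the others. -/
/-!
The graph is a ring of `k = n / 2` diamonds (copies of `K₄` minus an edge), the two tips of each
diamond being joined to the neighbouring diamonds. If a perfect matching uses the diagonal of some
diamond, it must use the edge leaving one of its tips, which forces the diagonal of the next
diamond; so it is the matching made of all diagonals and all connecting edges. Otherwise it uses no
connecting edge, and restricts on every diamond to one of its two perfect matchings avoiding the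
diagonal. This gives `2 ^ k + 1` perfect matchings, and the first one shares no edge with any of
the others.
-/

open SimpleGraph Function

namespace SimpleGraph

variable {V W : Type*} {G : SimpleGraph V} {G' : SimpleGraph W} {f g : V → V}

def matchingInvolutions (G : SimpleGraph V) : Set (V → V) :=
  {f | Involutive f ∧ ∀ v, G.Adj v (f v)}

def subgraphOfPartner (G : SimpleGraph V) (f : V → V) : G.Subgraph where
  verts := Set.univ
  Adj u v := G.Adj u v ∧ f u = v ∧ f v = u
  adj_sub h := h.1
  edge_vert _ := Set.mem_univ _
  symm := ⟨fun _ _ h => ⟨h.1.symm, h.2.2, h.2.1⟩⟩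

lemma subgraphOfPartner_adj {u v : V} :
    (G.subgraphOfPartner f).Adj u v ↔ G.Adj u v ∧ f u = v ∧ f v = u :=
  Iff.rfl

lemma subgraphOfPartner_adj_iff (hf : f ∈ G.matchingInvolutions) {u v : V} :
    (G.subgraphOfPartner f).Adj u v ↔ f u = v :=
  ⟨fun h => h.2.1, by rintro rfl; exact ⟨hf.2 u, rfl, hf.1 u⟩⟩

lemma isPerfectMatching_subgraphOfPartner (hf : f ∈ G.matchingInvolutions) :
    (G.subgraphOfPartner f).IsPerfectMatching :=
  Subgraph.isPerfectMatching_iff.2 fun v =>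
    ⟨f v, (subgraphOfPartner_adj_iff hf).2 rfl,
      fun _ hw => ((subgraphOfPartner_adj_iff hf).1 hw).symm⟩

lemma Subgraph.IsPerfectMatching.exists_eq_subgraphOfPartner {M : G.Subgraph}
    (hM : M.IsPerfectMatching) : ∃ f ∈ G.matchingInvolutions, G.subgraphOfPartner f = M := by
  choose f hf using fun v => Subgraph.isPerfectMatching_iff.1 hM v
  have hadj : ∀ u v, M.Adj u v ↔ f u = v :=
    fun u v => ⟨fun h => ((hf u).2 v h).symm, by rintro rfl; exact (hf u).1⟩
  have hmem : f ∈ G.matchingInvolutions :=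
    ⟨fun v => (hadj _ _).1 (hf v).1.symm, fun v => M.adj_sub (hf v).1⟩
  have hverts : Set.univ = M.verts := (Set.eq_univ_of_forall hM.2).symm
  refine ⟨f, hmem, Subgraph.ext hverts ?_⟩
  funext u v
  exact propext ((subgraphOfPartner_adj_iff hmem).trans (hadj u v).symm)

lemma injOn_subgraphOfPartner : Set.InjOn G.subgraphOfPartner G.matchingInvolutions := by
  intro f hf g hg h
  funext v
  have hv : (G.subgraphOfPartner f).Adj v (f v) := (subgraphOfPartner_adj_iff hf).2 rfl
  rw [h] at hv
  exact ((subgraphOfPartner_adj_iff hg).1 hv).symm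

lemma ncard_setOf_isPerfectMatching :
    {M : G.Subgraph | M.IsPerfectMatching}.ncard = G.matchingInvolutions.ncard := by
  have : {M : G.Subgraph | M.IsPerfectMatching} =
      G.subgraphOfPartner '' G.matchingInvolutions :=
    Set.ext fun M => ⟨fun hM => hM.exists_eq_subgraphOfPartner,
      by rintro ⟨f, hf, rfl⟩; exact isPerfectMatching_subgraphOfPartner hf⟩
  rw [this, injOn_subgraphOfPartner.ncard_image]

lemma edgeSet_subgraphOfPartner_inter (h : ∀ v, f v ≠ g v) :
    (G.subgraphOfPartner f).edgeSet ∩ (G.subgraphOfPartner g).edgeSet = ∅ := by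
  ext e
  induction e with
  | h u v =>
    simp only [Set.mem_inter_iff, Subgraph.mem_edgeSet, subgraphOfPartner_adj,
      Set.mem_empty_iff_false, iff_false]
    exact fun ⟨⟨_, hfu, _⟩, _, hgu, _⟩ => h u (hfu.trans hgu.symm)

lemma exists_isPerfectMatching_edgeSet_inter_eq_empty (hf : f ∈ G.matchingInvolutions)
    (h : ∀ g ∈ G.matchingInvolutions, g ≠ f → ∀ v, f v ≠ g v) :
    ∃ M : G.Subgraph, M.IsPerfectMatching ∧
      ∀ M' : G.Subgraph, M'.IsPerfectMatching → M' ≠ M → M.edgeSet ∩ M'.edgeSet = ∅ := by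
  refine ⟨_, isPerfectMatching_subgraphOfPartner hf, fun M' hM' hne => ?_⟩
  obtain ⟨g, hg, rfl⟩ := hM'.exists_eq_subgraphOfPartner
  exact edgeSet_subgraphOfPartner_inter (h g hg fun hgf => hne (hgf ▸ rfl))

namespace Iso

variable (φ : G ≃g G')

lemma ncard_neighborSet (v : V) :
    (G'.neighborSet (φ v)).ncard = (G.neighborSet v).ncard := by
  rw [← Nat.card_coe_set_eq, ← Nat.card_coe_set_eq]
  exact Nat.card_congr (φ.mapNeighborSet v).symm

lemma conj_mem_matchingInvolutions (hf : f ∈ G.matchingInvolutions) :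
    φ.toEquiv.conj f ∈ G'.matchingInvolutions :=
  ⟨fun w => by
      simp only [Equiv.conj_apply, Equiv.symm_apply_apply, hf.1 _, Equiv.apply_symm_apply],
    fun w => by
      have := φ.map_adj_iff.2 (hf.2 (φ.toEquiv.symm w))
      rwa [← RelIso.coe_fn_toEquiv, Equiv.apply_symm_apply] at this⟩

lemma matchingInvolutions_eq :
    G'.matchingInvolutions = φ.toEquiv.conj '' G.matchingInvolutions :=
  Set.ext fun g =>
    ⟨fun hg => ⟨_, φ.symm.conj_mem_matchingInvolutions hg, φ.toEquiv.conj.apply_symm_apply g⟩,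
      by rintro ⟨f, hf, rfl⟩; exact φ.conj_mem_matchingInvolutions hf⟩

lemma conj_ne_of_forall_ne (h : ∀ g ∈ G.matchingInvolutions, g ≠ f → ∀ v, f v ≠ g v) :
    ∀ g ∈ G'.matchingInvolutions, g ≠ φ.toEquiv.conj f → ∀ w, φ.toEquiv.conj f w ≠ g w := by
  rw [φ.matchingInvolutions_eq]
  rintro _ ⟨g, hg, rfl⟩ hne w
  exact fun heq => h g hg (fun hgf => hne (hgf ▸ rfl)) _ (φ.toEquiv.injective heq)

end Iso

end SimpleGraph

/-- Vertex `(i, j)` is vertex `j` of the `i`-th diamond: `0` and `2` are joined by the diagonal,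
`1` and `3` are the tips, and the tip `1` of each diamond is joined to the tip `3` of the next. -/
def diamondRing (k : ℕ) [NeZero k] : SimpleGraph (Fin k × Fin 4) :=
  SimpleGraph.fromRel fun u v =>
    (u.1 = v.1 ∧ ¬(u.2 = 1 ∧ v.2 = 3) ∧ ¬(u.2 = 3 ∧ v.2 = 1)) ∨
      (v.1 = u.1 + 1 ∧ u.2 = 1 ∧ v.2 = 3)

namespace diamondRing

variable {k : ℕ} [NeZero k] {i : Fin k} {w : Fin k × Fin 4}

lemma adj_zero : (diamondRing k).Adj (i, 0) w ↔ w = (i, 1) ∨ w = (i, 2) ∨ w = (i, 3) := by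
  obtain ⟨i', j⟩ := w
  fin_cases j <;> simp [diamondRing, Prod.ext_iff, eq_comm]

lemma adj_one : (diamondRing k).Adj (i, 1) w ↔ w = (i, 0) ∨ w = (i, 2) ∨ w = (i + 1, 3) := by
  obtain ⟨i', j⟩ := w
  fin_cases j <;> simp [diamondRing, Prod.ext_iff, eq_comm]

lemma adj_two : (diamondRing k).Adj (i, 2) w ↔ w = (i, 0) ∨ w = (i, 1) ∨ w = (i, 3) := by
  obtain ⟨i', j⟩ := w
  fin_cases j <;> simp [diamondRing, Prod.ext_iff, eq_comm]

lemma adj_three : (diamondRing k).Adj (i, 3) w ↔ w = (i, 0) ∨ w = (i, 2) ∨ w = (i - 1, 1) := by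
  obtain ⟨i', j⟩ := w
  fin_cases j <;> simp [diamondRing, Prod.ext_iff, eq_comm, eq_sub_iff_add_eq]

lemma ncard_neighborSet (v : Fin k × Fin 4) : ((diamondRing k).neighborSet v).ncard = 3 := by
  obtain ⟨i, j⟩ := v
  rw [Set.ncard_eq_three]
  fin_cases j
  · exact ⟨(i, 1), (i, 2), (i, 3), by simp, by simp, by simp, Set.ext fun _ => adj_zero⟩
  · exact ⟨(i, 0), (i, 2), (i + 1, 3), by simp, by simp, by simp,
      Set.ext fun _ => adj_one⟩
  · exact ⟨(i, 0), (i, 1), (i, 3), by simp, by simp, by simp, Set.ext fun _ => adj_two⟩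
  · exact ⟨(i, 0), (i, 2), (i - 1, 1), by simp, by simp, by simp,
      Set.ext fun _ => adj_three⟩

variable (k) in
def diagonalPartner (v : Fin k × Fin 4) : Fin k × Fin 4 :=
  ![(v.1, 2), (v.1 + 1, 3), (v.1, 0), (v.1 - 1, 1)] v.2

variable (k) in
def blockPartner (c : Fin k → Bool) (v : Fin k × Fin 4) : Fin k × Fin 4 :=
  (v.1, (if c v.1 then ![1, 0, 3, 2] else ![3, 2, 1, 0]) v.2)

lemma diagonalPartner_mem : diagonalPartner k ∈ (diamondRing k).matchingInvolutions := by
  refine ⟨fun ⟨i, j⟩ => ?_, fun ⟨i, j⟩ => ?_⟩ <;>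
    fin_cases j <;> simp [diagonalPartner, adj_zero, adj_one, adj_two, adj_three]

lemma blockPartner_mem (c : Fin k → Bool) :
    blockPartner k c ∈ (diamondRing k).matchingInvolutions := by
  refine ⟨fun ⟨i, j⟩ => ?_, fun ⟨i, j⟩ => ?_⟩ <;>
    cases hc : c i <;> fin_cases j <;>
      simp [blockPartner, adj_zero, adj_one, adj_two, adj_three, hc]

lemma diagonalPartner_ne_blockPartner (c : Fin k → Bool) (v : Fin k × Fin 4) :
    diagonalPartner k v ≠ blockPartner k c v := by
  obtain ⟨i, j⟩ := v
  cases hc : c i <;> fin_cases j <;> simp [diagonalPartner, blockPartner, hc]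

omit [NeZero k] in
lemma blockPartner_injective : Injective (blockPartner k) := by
  intro c c' h
  funext i
  have := congrFun h (i, 0)
  cases hc : c i <;> cases hc' : c' i <;> simp_all [blockPartner]

section Classification

variable {f : Fin k × Fin 4 → Fin k × Fin 4} (hinv : Involutive f)
  (hadj : ∀ v, (diamondRing k).Adj v (f v))
include hinv hadj

lemma partner_one_of_partner_zero (h : f (i, 0) = (i, 2)) : f (i, 1) = (i + 1, 3) := by
  have h1 := adj_one.1 (hadj (i, 1))
  have := hinv (i, 0)
  have := hinv (i, 1)
  grind

lemma partner_zero_succ_of_partner_one (h : f (i, 1) = (i + 1, 3)) :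
    f (i + 1, 0) = (i + 1, 2) := by
  have h0 := adj_zero.1 (hadj (i + 1, 0))
  have h2 := adj_two.1 (hadj (i + 1, 2))
  have := hinv (i, 1)
  have := hinv (i + 1, 0)
  have := hinv (i + 1, 2)
  grind

open Fin.NatCast in
lemma eq_diagonalPartner_of_partner_zero {i₀ : Fin k} (h : f (i₀, 0) = (i₀, 2)) :
    f = diagonalPartner k := by
  have hstep (i : Fin k) (hi : f (i, 0) = (i, 2)) : f (i + 1, 0) = (i + 1, 2) :=
    partner_zero_succ_of_partner_one hinv hadj (partner_one_of_partner_zero hinv hadj hi)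
  have hall (i : Fin k) : f (i, 0) = (i, 2) := by
    have hm (m : ℕ) : f (i₀ + m, 0) = (i₀ + m, 2) := by
      induction m with
      | zero => simpa using h
      | succ m ih => simpa [add_assoc] using hstep _ ih
    simpa using hm (i - i₀).val
  funext ⟨i, j⟩
  fin_cases j
  · exact hall i
  · exact partner_one_of_partner_zero hinv hadj (hall i)
  · simpa [diagonalPartner, ← hall i] using hinv (i, 0)
  · have h := partner_one_of_partner_zero hinv hadj (hall (i - 1))
    rw [sub_add_cancel] at h
    simpa [diagonalPartner, ← h] using hinv (i - 1, 1)

lemma eq_blockPartner_of_forall_partner_zero_ne (hd : ∀ i, f (i, 0) ≠ (i, 2)) :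
    f = blockPartner k fun i => decide (f (i, 0) = (i, 1)) := by
  funext ⟨i, j⟩
  have h0 := adj_zero.1 (hadj (i, 0))
  have h1 := adj_one.1 (hadj (i, 1))
  have h2 := adj_two.1 (hadj (i, 2))
  have h3 := adj_three.1 (hadj (i, 3))
  have no_cross_succ : f (i, 1) ≠ (i + 1, 3) :=
    fun h => hd _ (partner_zero_succ_of_partner_one hinv hadj h)
  have no_cross_pred : f (i, 3) ≠ (i - 1, 1) := fun h => by
    have := hinv (i, 3)
    exact hd _ (partner_zero_succ_of_partner_one hinv hadj (i := i - 1) (by grind))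
  have := hd i
  have := hinv (i, 0); have := hinv (i, 1); have := hinv (i, 2); have := hinv (i, 3)
  by_cases hc : f (i, 0) = (i, 1) <;> fin_cases j <;> simp [blockPartner, hc] <;> grind

end Classification

lemma matchingInvolutions_eq :
    (diamondRing k).matchingInvolutions =
      insert (diagonalPartner k) (Set.range (blockPartner k)) := by
  ext f
  refine ⟨fun ⟨hinv, hadj⟩ => ?_, ?_⟩
  · by_cases hd : ∃ i, f (i, 0) = (i, 2)
    · obtain ⟨i, hi⟩ := hd
      exact Or.inl (eq_diagonalPartner_of_partner_zero hinv hadj hi)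
    · push Not at hd
      exact Or.inr ⟨_, (eq_blockPartner_of_forall_partner_zero_ne hinv hadj hd).symm⟩
  · rintro (rfl | ⟨c, rfl⟩)
    exacts [diagonalPartner_mem, blockPartner_mem c]

lemma ncard_matchingInvolutions : (diamondRing k).matchingInvolutions.ncard = 2 ^ k + 1 := by
  have hnot : diagonalPartner k ∉ Set.range (blockPartner k) :=
    fun ⟨c, h⟩ => diagonalPartner_ne_blockPartner c (0, 0) (congrFun h _).symm
  rw [matchingInvolutions_eq, Set.ncard_insert_of_notMem hnot (Set.finite_range _),
    Set.ncard_range_of_injective blockPartner_injective]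
  simp

lemma diagonalPartner_ne_of_ne :
    ∀ g ∈ (diamondRing k).matchingInvolutions, g ≠ diagonalPartner k →
      ∀ v, diagonalPartner k v ≠ g v := by
  rw [matchingInvolutions_eq]
  rintro _ (rfl | ⟨c, rfl⟩) hne v
  exacts [absurd rfl hne, diagonalPartner_ne_blockPartner c v]

end diamondRing

/-- For every even `n > 0` there is a 3-regular graph on `2n` vertices with exactly
`2^(n/2) + 1` perfect matchings, one of which is disjoint from all the others. -/
theorem stmt_2 (n : ℕ) (hn : 0 < n) (heven : Even n) :
    ∃ G : SimpleGraph (Fin (2 * n)),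
      (∀ v, (G.neighborSet v).ncard = 3) ∧
      {M : G.Subgraph | M.IsPerfectMatching}.ncard = 2 ^ (n / 2) + 1 ∧
      ∃ M : G.Subgraph, M.IsPerfectMatching ∧
        ∀ M' : G.Subgraph, M'.IsPerfectMatching → M' ≠ M → M.edgeSet ∩ M'.edgeSet = ∅ := by
  obtain ⟨k, rfl⟩ := heven
  have : NeZero k := ⟨by omega⟩
  let e : Fin k × Fin 4 ≃ Fin (2 * (k + k)) := finProdFinEquiv.trans (finCongr (by omega))
  let φ := (Iso.comap e.symm (diamondRing k)).symm
  refine ⟨(diamondRing k).comap e.symm, fun w => ?_, ?_, ?_⟩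
  · simpa using (φ.ncard_neighborSet (φ.symm w)).trans (diamondRing.ncard_neighborSet _)
  · rw [show (k + k) / 2 = k by omega, ncard_setOf_isPerfectMatching, φ.matchingInvolutions_eq,
      Set.ncard_image_of_injective _ φ.toEquiv.conj.injective,
      diamondRing.ncard_matchingInvolutions]
  · exact exists_isPerfectMatching_edgeSet_inter_eq_empty
      (φ.conj_mem_matchingInvolutions diamondRing.diagonalPartner_mem)
      (φ.conj_ne_of_forall_ne diamondRing.diagonalPartner_ne_of_ne)
end

section
/- If G is a loopless directed graph for which the number of derangements on G equals exactly half the number of permutations on G, then G is a directed cycle. -/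
/-!
Fix a vertex `v`. Removing the cycle through `v` from a permutation `σ` on the digraph leaves a
permutation `g` fixing `v`, and `σ` is a derangement exactly when the removed cycle is Hamiltonian
on the fixed-point set `K` of `g`. Writing `h K` for the number of Hamiltonian cycles on `K` and
`s K` for the number of other cycles through `v` inside `K`, this gives
`#derangements ≤ ∑ g, h K` and `#(other permutations) ≥ ∑ g, (1 + s K)`, the `1` counting `g`
itself.

The key inequality is `h K ≤ s K` as soon as `h K ≥ 2`, by induction on `|K|`: split the
Hamiltonian cycles by the successor `y` of `v`. If only one of them uses the arc `v → y`, that arc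
is a chord of another Hamiltonian cycle and shortcuts it to a non-Hamiltonian cycle through
`v → y`; if several do, contract the arc `v → y`.

Hence `h ≤ 1 + s` always, and `2 · #derangements = #permutations` forces equality at `g = 1`:
there is a unique Hamiltonian cycle `π` and, `v` being arbitrary, no other cycle at all. An arc
not on `π` would shortcut `π` to another cycle.
-/

open Equiv Equiv.Perm Finset

namespace DigraphPerm

variable {V : Type*} {A : V → V → Prop}

def IsPermOn (A : V → V → Prop) (σ : Perm V) : Prop :=
  ∀ x, σ x ≠ x → A x (σ x)

theorem isPermOn_iff {σ : Perm V} : IsPermOn A σ ↔ ∀ v, σ v = v ∨ A v (σ v) :=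
  forall_congr' fun _ => or_iff_not_imp_left.symm

theorem isPermOn_mul_iff {g c : Perm V} (h : g.Disjoint c) :
    IsPermOn A (g * c) ↔ IsPermOn A g ∧ IsPermOn A c := by
  have hg : ∀ x, c x = x → (g * c) x = g x := fun x hx => by rw [mul_apply, hx]
  have hc : ∀ x, g x = x → (g * c) x = c x := fun x hx => by rw [h.commute.eq, mul_apply, hx]
  refine ⟨fun hgc => ⟨fun x hx => ?_, fun x hx => ?_⟩, fun ⟨hgA, hcA⟩ x hx => ?_⟩
  · have hcx := (h x).resolve_left hx
    rw [← hg x hcx] at hx ⊢; exact hgc x hx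
  · have hgx := (h x).resolve_right hx
    rw [← hc x hgx] at hx ⊢; exact hgc x hx
  · rcases h x with hgx | hcx
    · rw [hc x hgx] at hx ⊢; exact hcA x hx
    · rw [hg x hcx] at hx ⊢; exact hgA x hx

theorem sameCycle_mem_of_mapsTo [Finite V] {f : Perm V} {s : Set V} {x y : V}
    (h : f.SameCycle x y) (hs : Set.MapsTo f s s) (hx : x ∈ s) : y ∈ s := by
  obtain ⟨i, -, rfl⟩ := h.exists_pow_eq'
  rw [coe_pow]
  exact hs.iterate i hx

variable [Fintype V] [DecidableEq V]

theorem isCycle_swap_mul_of_apply_eq_self {τ : Perm V} (hτ : τ.IsCycle) {v y : V}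
    (hv : τ v = v) (hy : τ y ≠ y) : (swap v y * τ).IsCycle := by
  set f := swap v y * τ
  have hyv : y ≠ v := fun h => hy (h ▸ hv)
  have hτ_ne_v : ∀ x, x ≠ v → τ x ≠ v := fun x hx h => hx (τ.injective (h.trans hv.symm))
  have hf_eq : ∀ x, x ≠ v → τ x ≠ y → f x = τ x := fun x hx hxy =>
    swap_apply_of_ne_of_ne (hτ_ne_v x hx) hxy
  have orbit : ∀ i : ℕ, f.SameCycle y ((τ ^ i) y) := by
    intro i
    induction i with
    | zero => exact SameCycle.refl f y
    | succ i ih =>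
      rw [pow_succ', mul_apply]
      by_cases hτi : τ ((τ ^ i) y) = y
      · rw [hτi]
      · have hi : (τ ^ i) y ≠ v := fun h => hyv
          ((τ ^ i).injective (h.trans (pow_apply_eq_self_of_apply_eq_self hv i).symm))
        rw [← hf_eq _ hi hτi]
        exact sameCycle_apply_right.mpr ih
  refine ⟨y, by rw [hf_eq y hyv hy]; exact hy, fun z hz => ?_⟩
  by_cases hzv : z = v
  · have hfv : f v = y := by simp [f, hv]
    rw [hzv, ← hfv]
    exact sameCycle_apply_left.mpr (SameCycle.refl f v)
  · have hτz : τ z ≠ z := fun h => hz (by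
      simp only [f, mul_apply, h]
      exact swap_apply_of_ne_of_ne hzv (fun hzy => hy (hzy ▸ h)))
    obtain ⟨i, -, rfl⟩ := (hτ.sameCycle hy hτz).exists_pow_eq'
    exact orbit i

theorem cycleOf_mul_of_disjoint {g c : Perm V} {v : V} (hd : g.Disjoint c) (hc : c.IsCycle)
    (hv : v ∈ c.support) : (g * c).cycleOf v = c := by
  rw [hd.cycleOf_mul_distrib, (cycleOf_eq_one_iff g).mpr ((hd v).resolve_right (mem_support.mp hv)),
    one_mul, hc.cycleOf_eq (mem_support.mp hv)]

theorem disjoint_of_support_subset_compl {g c : Perm V} (h : c.support ⊆ g.supportᶜ) :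
    g.Disjoint c :=
  disjoint_iff_disjoint_support.mpr (subset_compl_iff_disjoint_left.mp h)

/-- Rerouting `π` so that `v` jumps to `(π ^ k) v` cuts off the arc `π v, …, (π ^ (k - 1)) v`,
which is invariant under the new permutation and misses `v`. -/
theorem not_sameCycle_mul_swap (π : Perm V) (v : V) {k : ℕ} (hk : 2 ≤ k)
    (hk_min : ∀ j < k, (π ^ j) v ≠ (π ^ k) v) (j : ℕ) (hj1 : 1 ≤ j) (hjk : j < k) :
    ¬(π * swap ((π ^ (k - 1)) v) v).SameCycle v ((π ^ j) v) := by
  have pow_succ_apply : ∀ i, π ((π ^ i) v) = (π ^ (i + 1)) v := fun i => by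
    rw [pow_succ', mul_apply]
  set a := (π ^ (k - 1)) v
  have ha : π a = (π ^ k) v := by rw [pow_succ_apply]; congr 2; omega
  set U : Set V := {x | ∃ i, 1 ≤ i ∧ i < k ∧ (π ^ i) v = x}
  have hvU : v ∉ U := by
    rintro ⟨i, hi1, hik, hi⟩
    have := congrArg (π ^ (k - i)) hi
    rw [← mul_apply, ← pow_add, Nat.sub_add_cancel hik.le] at this
    exact hk_min (k - i) (by omega) this.symm
  have hUρ : Set.MapsTo (π * swap a v) U U := by
    rintro _ ⟨i, hi1, hik, rfl⟩
    by_cases hi : i = k - 1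
    · rw [hi]
      exact ⟨1, le_rfl, by omega, by simp [a]⟩
    · have hia : (π ^ i) v ≠ a := fun h => hk_min (i + 1) (by omega) <| by
        rw [← pow_succ_apply, h, ha]
      rw [mul_apply, swap_apply_of_ne_of_ne hia (fun h => hvU ⟨i, hi1, hik, h⟩), pow_succ_apply]
      exact ⟨i + 1, by omega, by omega, rfl⟩
  exact fun h => hvU (sameCycle_mem_of_mapsTo h.symm hUρ ⟨j, hj1, hjk, rfl⟩)

theorem _root_.Equiv.Perm.IsCycle.exists_shortcut {π : Perm V} (hπ : π.IsCycle)
    (hπA : IsPermOn A π) {v w : V} (hv : π v ≠ v) (hw : π w ≠ w) (hvw : A v w) (hwv : w ≠ v) (hwπ : w ≠ π v) :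
    ∃ σ : Perm V, σ.IsCycle ∧ IsPermOn A σ ∧ σ v = w ∧ σ.support ⊂ π.support := by
  have hex : ∃ k : ℕ, (π ^ k) v = w := hπ.exists_pow_eq hv hw
  set k := Nat.find hex
  have hk : (π ^ k) v = w := Nat.find_spec hex
  have hk_min : ∀ j < k, (π ^ j) v ≠ (π ^ k) v := fun j hj => hk ▸ Nat.find_min hex hj
  have hk2 : 2 ≤ k := by
    by_contra! h
    interval_cases h : k
    · exact hwv (by simpa using hk.symm)
    · exact hwπ (by simpa using hk.symm)
  have hcut := not_sameCycle_mul_swap π v hk2 hk_min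
  set a := (π ^ (k - 1)) v
  set ρ := π * swap a v
  have hρv : ρ v = w := by
    rw [mul_apply, swap_apply_right, ← mul_apply, ← pow_succ', Nat.sub_add_cancel (by omega), hk]
  have hmoved : ∀ x, ρ.cycleOf v x ≠ x → x = v ∨ ρ.cycleOf v x = π x := by
    intro x hx
    have hvx : ρ.SameCycle v x := by
      by_contra h; exact hx (cycleOf_apply_of_not_sameCycle h)
    rw [hvx.cycleOf_apply]
    by_cases hxv : x = v
    · exact Or.inl hxv
    · have hxa : x ≠ a := by
        rintro rfl
        exact hcut (k - 1) (by omega) (by omega) hvx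
      exact Or.inr (by simp [ρ, swap_apply_of_ne_of_ne hxa hxv])
  refine ⟨ρ.cycleOf v, isCycle_cycleOf ρ (by rwa [hρv]), fun x hx => ?_,
    by rw [cycleOf_apply_self, hρv], ?_⟩
  · rcases hmoved x hx with rfl | h
    · rwa [cycleOf_apply_self, hρv]
    · rw [h] at hx ⊢; exact hπA x hx
  · refine Finset.ssubset_iff_subset_ne.mpr ⟨fun x hx => ?_, fun h => ?_⟩
    · rw [mem_support] at hx ⊢
      rcases hmoved x hx with rfl | h
      · exact hv
      · rwa [← h]
    · have : π v ∈ (ρ.cycleOf v).support := h ▸ mem_support.mpr (π.injective.ne hv)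
      exact hcut 1 le_rfl (by omega) (by simpa using (mem_support_cycleOf_iff.mp this).1)

open scoped Classical in
noncomputable def hamCycles (A : V → V → Prop) (K : Finset V) : Finset (Perm V) :=
  {c | c.IsCycle ∧ c.support = K ∧ IsPermOn A c}

open scoped Classical in
noncomputable def shortCycles (A : V → V → Prop) (K : Finset V) (v : V) : Finset (Perm V) :=
  {c | c.IsCycle ∧ v ∈ c.support ∧ c.support ⊂ K ∧ IsPermOn A c}

variable {K : Finset V} {c σ : Perm V} {v y : V}

@[simp]
theorem mem_hamCycles : c ∈ hamCycles A K ↔ c.IsCycle ∧ c.support = K ∧ IsPermOn A c := by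
  simp [hamCycles]

@[simp]
theorem mem_shortCycles :
    c ∈ shortCycles A K v ↔ c.IsCycle ∧ v ∈ c.support ∧ c.support ⊂ K ∧ IsPermOn A c := by
  simp [shortCycles]

theorem eq_of_mem_hamCycles_of_apply_apply_eq_self (hσ : σ ∈ hamCycles A K) (hc : c ∈ hamCycles A K)
    (hv : v ∈ K) (hσv : σ (σ v) = v) : c = σ := by
  obtain ⟨hσcyc, hσK, -⟩ := mem_hamCycles.mp hσ
  obtain ⟨hccyc, hcK, -⟩ := mem_hamCycles.mp hc
  have hσ_swap := hσcyc.eq_swap_of_apply_apply_eq_self (mem_support.mp (hσK ▸ hv)) hσv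
  have hK : K = {v, σ v} := by
    rw [← hσK, hσ_swap, support_swap (mem_support.mp (hσK ▸ hv)).symm, swap_apply_left]
  have hcv : c v ≠ v := mem_support.mp (hcK ▸ hv)
  have hcv_mem : c v ∈ K := hcK ▸ apply_mem_support.mpr (hcK ▸ hv)
  have hcvσ : c v = σ v := by simpa [hK, hcv] using hcv_mem
  have hccv_mem : c (c v) ∈ K := hcK ▸ apply_mem_support.mpr (hcK ▸ hcv_mem)
  have hccv_ne : c (σ v) ≠ σ v := hcvσ ▸ c.injective.ne hcv
  have hccv : c (c v) = v := by simpa [hK, hcvσ, hccv_ne] using hccv_mem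
  rw [hccyc.eq_swap_of_apply_apply_eq_self hcv hccv, hcvσ, ← hσ_swap]

/-- Contraction of the arc `v → y`: the merged vertex is `y`, which keeps its own out-arcs and
receives the in-arcs of `v`. -/
def contract (A : V → V → Prop) (v y : V) : V → V → Prop :=
  fun u z => if z = y then A u v else A u z

theorem swap_mul_mem_hamCycles_contract (hσ : σ ∈ hamCycles A K) (hv : v ∈ K)
    (hσσ : σ (σ v) ≠ v) : swap v (σ v) * σ ∈ hamCycles (contract A v (σ v)) (K.erase v) := by
  obtain ⟨hcyc, hK, hA⟩ := mem_hamCycles.mp hσ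
  have hσv : σ v ≠ v := mem_support.mp (hK ▸ hv)
  refine mem_hamCycles.mpr ⟨hcyc.swap_mul hσv hσσ, ?_, fun x hx => ?_⟩
  · rw [support_swap_mul_eq σ v hσσ, hK, sdiff_singleton_eq_erase]
  · have hxv : x ≠ v := by rintro rfl; simp at hx
    have hσxy : σ x ≠ σ v := σ.injective.ne hxv
    by_cases hσx : σ x = v
    · have hx' : σ x ≠ x := fun h => hxv (h.symm.trans hσx)
      simpa [contract, hσx] using hσx ▸ hA x hx'
    · rw [mul_apply, swap_apply_of_ne_of_ne hσx hσxy] at hx ⊢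
      simpa [contract, hσxy] using hA x hx

theorem swap_mul_mem_shortCycles (hτ : σ ∈ shortCycles (contract A v y) (K.erase v) y)
    (hv : v ∈ K) (hvy : A v y) : swap v y * σ ∈ shortCycles A K v ∧ (swap v y * σ) v = y := by
  obtain ⟨hcyc, hy, hss, hA⟩ := mem_shortCycles.mp hτ
  have hσv : σ v = v := notMem_support.mp fun h => by simpa using hss.subset h
  have hyv : y ≠ v := (mem_erase.mp (hss.subset hy)).1
  have hfv : (swap v y * σ) v = y := by rw [mul_apply, hσv, swap_apply_left]
  have hfix : ∀ x, σ x = x → x ≠ v → (swap v y * σ) x = x := fun x hx hxv => by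
    rw [mul_apply, hx, swap_apply_of_ne_of_ne hxv (by rintro rfl; exact mem_support.mp hy hx)]
  refine ⟨mem_shortCycles.mpr ⟨isCycle_swap_mul_of_apply_eq_self hcyc hσv (mem_support.mp hy),
    by simp [hfv, hyv], ?_, fun x hx => ?_⟩, hfv⟩
  · obtain ⟨z, hzK, hzσ⟩ := exists_of_ssubset hss
    have hsub : (swap v y * σ).support ⊆ K := fun x hx => by
      by_cases hxv : x = v
      · exact hxv ▸ hv
      · refine mem_of_mem_erase (hss.subset (mem_support.mpr fun h => ?_))
        exact mem_support.mp hx (hfix x h hxv)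
    refine (ssubset_iff_of_subset hsub).mpr ⟨z, mem_of_mem_erase hzK, fun hz => ?_⟩
    exact mem_support.mp hz (hfix z (notMem_support.mp hzσ) (ne_of_mem_erase hzK))
  · by_cases hxv : x = v
    · subst hxv; rwa [hfv]
    · have hσx : σ x ≠ x := fun h => hx (hfix x h hxv)
      have hσxv : σ x ≠ v := fun h => hxv (σ.injective (h.trans hσv.symm))
      by_cases hσxy : σ x = y
      · rw [mul_apply, hσxy, swap_apply_right]
        simpa [contract, hσxy] using hA x hσx
      · rw [mul_apply, swap_apply_of_ne_of_ne hσxv hσxy]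
        simpa [contract, hσxy] using hA x hσx

theorem exists_mem_shortCycles_apply_eq (hσ : σ ∈ hamCycles A K) (hc : c ∈ hamCycles A K)
    (hv : v ∈ K) (hne : c v ≠ σ v) : ∃ τ ∈ shortCycles A K v, τ v = σ v := by
  obtain ⟨-, hσK, hσA⟩ := mem_hamCycles.mp hσ
  obtain ⟨hccyc, rfl, hcA⟩ := mem_hamCycles.mp hc
  have hσv : σ v ≠ v := mem_support.mp (hσK ▸ hv)
  have hcσv : c (σ v) ≠ σ v := mem_support.mp (hσK ▸ apply_mem_support.mpr (hσK ▸ hv))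
  obtain ⟨τ, hτcyc, hτA, hτv, hτc⟩ :=
    hccyc.exists_shortcut hcA (mem_support.mp hv) hcσv (hσA v hσv) hσv hne.symm
  exact ⟨τ, mem_shortCycles.mpr ⟨hτcyc, mem_support.mpr (hτv ▸ hσv), hτc, hτA⟩, hτv⟩

theorem apply_apply_ne_of_two_le_card (hv : v ∈ K) (h2 : 2 ≤ #(hamCycles A K))
    (hσ : σ ∈ hamCycles A K) : σ (σ v) ≠ v := fun hσσ => by
  have : #(hamCycles A K) ≤ 1 := card_le_one.mpr fun c hc c' hc' =>
    (eq_of_mem_hamCycles_of_apply_apply_eq_self hσ hc hv hσσ).trans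
      (eq_of_mem_hamCycles_of_apply_apply_eq_self hσ hc' hv hσσ).symm
  omega

theorem card_filter_hamCycles_le_of_card_le_one (hv : v ∈ K) (h2 : 2 ≤ #(hamCycles A K))
    (h1 : #{σ ∈ hamCycles A K | σ v = y} ≤ 1) :
    #{σ ∈ hamCycles A K | σ v = y} ≤ #{τ ∈ shortCycles A K v | τ v = y} := by
  obtain hempty | ⟨σ, hσ⟩ := eq_empty_or_nonempty {σ ∈ hamCycles A K | σ v = y}
  · simp [hempty]
  obtain ⟨hσH, rfl⟩ := mem_filter.mp hσ
  obtain ⟨c, hc, hcv⟩ : ∃ c ∈ hamCycles A K, c v ≠ σ v := by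
    by_contra! h
    rw [filter_true_of_mem h] at h1
    omega
  obtain ⟨τ, hτ, hτv⟩ := exists_mem_shortCycles_apply_eq hσH hc hv hcv
  exact h1.trans (card_pos.mpr ⟨τ, mem_filter.mpr ⟨hτ, hτv⟩⟩)

theorem card_filter_hamCycles_le_card_hamCycles_contract (hv : v ∈ K)
    (h2 : 2 ≤ #(hamCycles A K)) (y : V) :
    #{σ ∈ hamCycles A K | σ v = y} ≤ #(hamCycles (contract A v y) (K.erase v)) :=
  card_le_card_of_injOn (swap v y * ·)
    (fun σ hσ => by
      obtain ⟨hσH, rfl⟩ := mem_filter.mp hσ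
      exact swap_mul_mem_hamCycles_contract hσH hv (apply_apply_ne_of_two_le_card hv h2 hσH))
    (fun _ _ _ _ h => mul_left_cancel h)

theorem card_shortCycles_contract_le (hv : v ∈ K) (hvy : A v y) :
    #(shortCycles (contract A v y) (K.erase v) y) ≤ #{τ ∈ shortCycles A K v | τ v = y} :=
  card_le_card_of_injOn (swap v y * ·)
    (fun _ hτ => mem_filter.mpr (swap_mul_mem_shortCycles hτ hv hvy))
    (fun _ _ _ _ h => mul_left_cancel h)

theorem card_hamCycles_le_card_shortCycles (hv : v ∈ K) (h2 : 2 ≤ #(hamCycles A K)) :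
    #(hamCycles A K) ≤ #(shortCycles A K v) := by
  induction K using Finset.strongInduction generalizing A v with
  | H K ih =>
  have hfiber : ∀ y, #{σ ∈ hamCycles A K | σ v = y} ≤ #{τ ∈ shortCycles A K v | τ v = y} := by
    intro y
    by_cases h1 : #{σ ∈ hamCycles A K | σ v = y} ≤ 1
    · exact card_filter_hamCycles_le_of_card_le_one hv h2 h1
    obtain ⟨σ, hσ⟩ := card_pos.mp (by omega : 0 < #{σ ∈ hamCycles A K | σ v = y})
    obtain ⟨hσH, rfl⟩ := mem_filter.mp hσ
    obtain ⟨-, hσK, hσA⟩ := mem_hamCycles.mp hσH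
    have hσv : σ v ≠ v := mem_support.mp (hσK ▸ hv)
    have hσvK : σ v ∈ K.erase v := mem_erase.mpr ⟨hσv, hσK ▸ apply_mem_support.mpr (hσK ▸ hv)⟩
    have hcontract := card_filter_hamCycles_le_card_hamCycles_contract hv h2 (σ v)
    calc _ ≤ #(hamCycles (contract A v (σ v)) (K.erase v)) := hcontract
      _ ≤ #(shortCycles (contract A v (σ v)) (K.erase v) (σ v)) :=
        ih _ (erase_ssubset hv) hσvK (by omega)
      _ ≤ _ := card_shortCycles_contract_le hv (hσA v hσv)
  calc #(hamCycles A K) = ∑ y, #{σ ∈ hamCycles A K | σ v = y} :=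
        card_eq_sum_card_fiberwise (by simp)
    _ ≤ ∑ y, #{τ ∈ shortCycles A K v | τ v = y} := sum_le_sum fun y _ => hfiber y
    _ = #(shortCycles A K v) := (card_eq_sum_card_fiberwise (by simp)).symm

theorem card_hamCycles_le_succ (hv : v ∈ K) : #(hamCycles A K) ≤ #(shortCycles A K v) + 1 := by
  by_cases h : #(hamCycles A K) ≤ 1
  · omega
  · have := card_hamCycles_le_card_shortCycles hv (by omega : 2 ≤ #(hamCycles A K))
    omega

open scoped Classical in
noncomputable def permsOn (A : V → V → Prop) : Finset (Perm V) := {σ | IsPermOn A σ}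

noncomputable def derangementsOn (A : V → V → Prop) : Finset (Perm V) :=
  {σ ∈ permsOn A | σ.support = univ}

@[simp]
theorem mem_permsOn : σ ∈ permsOn A ↔ IsPermOn A σ := by simp [permsOn]

theorem one_mem_permsOn : 1 ∈ permsOn A :=
  mem_permsOn.mpr fun _ hx => absurd rfl hx

theorem mem_derangementsOn_iff (hA : ∀ v, ¬A v v) : σ ∈ derangementsOn A ↔ ∀ v, A v (σ v) := by
  rw [derangementsOn, mem_filter, mem_permsOn]
  refine ⟨fun ⟨hσA, hσU⟩ v => hσA v (mem_support.mp (hσU ▸ mem_univ v)), fun h => ?_⟩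
  refine ⟨fun v _ => h v, eq_univ_of_forall fun v => mem_support.mpr fun hv => hA v ?_⟩
  simpa [hv] using h v

theorem card_permsOn_eq_add (v : V) :
    #(permsOn A) = #(derangementsOn A) + #{σ ∈ permsOn A | σ v = v} +
      #{σ ∈ permsOn A | σ v ≠ v ∧ σ.support ≠ univ} := by
  have hD : derangementsOn A = {σ ∈ permsOn A | σ v ≠ v ∧ σ.support = univ} :=
    filter_congr fun σ _ => ⟨fun h => ⟨mem_support.mp (h ▸ mem_univ v), h⟩, And.right⟩
  have e1 := card_filter_add_card_filter_not (s := permsOn A) (fun σ => σ v = v)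
  have e2 := card_filter_add_card_filter_not (s := {σ ∈ permsOn A | ¬σ v = v})
    (fun σ => σ.support = univ)
  rw [filter_filter, filter_filter] at e2
  rw [hD]
  simp only [ne_eq]
  omega

theorem card_derangementsOn_le_sum (v : V) :
    #(derangementsOn A) ≤ ∑ g ∈ permsOn A with g v = v, #(hamCycles A g.supportᶜ) := by
  rw [← card_sigma]
  refine card_le_card_of_injOn (fun σ => ⟨σ * (σ.cycleOf v)⁻¹, σ.cycleOf v⟩) ?_ ?_
  · intro σ hσ
    obtain ⟨hσA, hσU⟩ := mem_filter.mp hσ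
    have hσv : v ∈ σ.support := hσU ▸ mem_univ v
    have hd : (σ * (σ.cycleOf v)⁻¹).Disjoint (σ.cycleOf v) :=
      disjoint_mul_inv_of_mem_cycleFactorsFinset (cycleOf_mem_cycleFactorsFinset_iff.mpr hσv)
    rw [← inv_mul_cancel_right σ (σ.cycleOf v)] at hσA hσU
    obtain ⟨hgA, hcA⟩ := (isPermOn_mul_iff hd).mp (mem_permsOn.mp hσA)
    have hvc : v ∈ (σ.cycleOf v).support :=
      mem_support_cycleOf_iff.mpr ⟨SameCycle.refl _ _, hσv⟩
    refine mem_sigma.mpr ⟨mem_filter.mpr ⟨mem_permsOn.mpr hgA,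
      (hd v).resolve_right (mem_support.mp hvc)⟩, mem_hamCycles.mpr ⟨isCycle_cycleOf _
        (mem_support.mp hσv), ?_, hcA⟩⟩
    rw [hd.support_mul] at hσU
    exact (IsCompl.of_eq (disjoint_iff_disjoint_support.mp hd).eq_bot hσU).symm.eq_compl
  · intro σ _ τ _ h
    simpa using congrArg (fun p : Σ _ : Perm V, Perm V => p.1 * p.2) h

theorem sum_card_shortCycles_le (v : V) :
    ∑ g ∈ permsOn A with g v = v, #(shortCycles A g.supportᶜ v) ≤
      #{σ ∈ permsOn A | σ v ≠ v ∧ σ.support ≠ univ} := by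
  rw [← card_sigma]
  refine card_le_card_of_injOn (fun p => p.1 * p.2) ?_ ?_
  · rintro ⟨g, c⟩ hgc
    obtain ⟨hg, hc⟩ := mem_sigma.mp hgc
    obtain ⟨hgA, hgv⟩ := mem_filter.mp hg
    obtain ⟨-, hvc, hcg, hcA⟩ := mem_shortCycles.mp hc
    have hd := disjoint_of_support_subset_compl hcg.subset
    obtain ⟨z, hzg, hzc⟩ := exists_of_ssubset hcg
    refine mem_filter.mpr ⟨mem_permsOn.mpr ((isPermOn_mul_iff hd).mpr
      ⟨mem_permsOn.mp hgA, hcA⟩), mem_support.mp (hd.support_mul ▸ mem_union_right _ hvc),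
      fun h => ?_⟩
    have hz : z ∈ g.support ∪ c.support := hd.support_mul ▸ h ▸ mem_univ z
    exact (mem_union.mp hz).elim (mem_compl.mp hzg) hzc
  · rintro ⟨g, c⟩ hgc ⟨g', c'⟩ hgc' (h : g * c = g' * c')
    simp only [coe_sigma, Set.mem_sigma_iff, mem_coe, mem_shortCycles] at hgc hgc'
    obtain ⟨-, hccyc, hvc, hcg, -⟩ := hgc
    obtain ⟨-, hc'cyc, hvc', hcg', -⟩ := hgc'
    have hcc : c = c' := by
      rw [← cycleOf_mul_of_disjoint (disjoint_of_support_subset_compl hcg.subset) hccyc hvc, h,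
        cycleOf_mul_of_disjoint (disjoint_of_support_subset_compl hcg'.subset) hc'cyc hvc']
    subst hcc
    rw [mul_right_cancel h]

theorem card_hamCycles_univ_eq_succ (v : V) (h : 2 * #(derangementsOn A) = #(permsOn A)) :
    #(hamCycles A univ) = #(shortCycles A univ v) + 1 := by
  have hle : ∀ g ∈ {g ∈ permsOn A | g v = v},
      #(hamCycles A g.supportᶜ) ≤ #(shortCycles A g.supportᶜ v) + 1 := fun g hg =>
    card_hamCycles_le_succ (mem_compl.mpr (notMem_support.mpr (mem_filter.mp hg).2))
  have hsum : ∑ g ∈ permsOn A with g v = v, #(hamCycles A g.supportᶜ) =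
      ∑ g ∈ permsOn A with g v = v, (#(shortCycles A g.supportᶜ v) + 1) := by
    have := card_derangementsOn_le_sum (A := A) v
    have := sum_card_shortCycles_le (A := A) v
    have := sum_le_sum hle
    have := card_permsOn_eq_add (A := A) v
    rw [sum_add_distrib, sum_const, smul_eq_mul, mul_one] at *
    omega
  have h1 : 1 ∈ {g ∈ permsOn A | g v = v} := mem_filter.mpr ⟨one_mem_permsOn, rfl⟩
  simpa using (sum_eq_sum_iff_of_le hle).mp hsum 1 h1

theorem shortCycles_univ_eq_empty (v : V) (h : 2 * #(derangementsOn A) = #(permsOn A)) :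
    shortCycles A univ v = ∅ := by
  have hsucc := card_hamCycles_univ_eq_succ v h
  by_contra hne
  have := card_pos.mpr (nonempty_iff_ne_empty.mpr hne)
  have := card_hamCycles_le_card_shortCycles (mem_univ v) (by omega : 2 ≤ #(hamCycles A univ))
  omega

theorem nonempty_of_two_mul_card_eq (h : 2 * #(derangementsOn A) = #(permsOn A)) :
    Nonempty V := by
  by_contra hV
  rw [not_nonempty_iff] at hV
  rw [derangementsOn, filter_true_of_mem fun σ _ => eq_univ_of_forall isEmptyElim] at h
  have := card_pos.mpr ⟨1, one_mem_permsOn (A := A)⟩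
  omega

theorem adj_iff_of_mem_hamCycles (hA : ∀ v, ¬A v v) {π : Perm V} (hπ : π ∈ hamCycles A univ)
    (hshort : ∀ v, shortCycles A univ v = ∅) (v w : V) : A v w ↔ π v = w := by
  obtain ⟨hcyc, hsupp, hπA⟩ := mem_hamCycles.mp hπ
  have hmoved : ∀ x, π x ≠ x := fun x => mem_support.mp (hsupp ▸ mem_univ x)
  refine ⟨fun hvw => ?_, fun h => h ▸ hπA v (hmoved v)⟩
  by_contra hne
  have hwv : w ≠ v := fun h => hA v (h ▸ hvw)
  obtain ⟨τ, hτcyc, hτA, hτv, hτπ⟩ :=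
    hcyc.exists_shortcut hπA (hmoved v) (hmoved w) hvw hwv (Ne.symm hne)
  have : τ ∈ shortCycles A univ v :=
    mem_shortCycles.mpr ⟨hτcyc, mem_support.mpr (hτv ▸ hwv), hsupp ▸ hτπ, hτA⟩
  simp [hshort v] at this

end DigraphPerm

open DigraphPerm

/-- If the number of derangements on a loopless digraph equals exactly half the number of
permutations, then the digraph is a directed cycle (its arc relation is the graph of a
fixed-point-free cyclic permutation of all the vertices). -/
theorem stmt_5 {V : Type*} [Fintype V] (E : V → V → Prop) (hE : Irreflexive E)
    (heq : 2 * {σ : Equiv.Perm V | ∀ v, E v (σ v)}.ncard =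
      {σ : Equiv.Perm V | ∀ v, σ v = v ∨ E v (σ v)}.ncard) :
    ∃ f : Equiv.Perm V, f.IsCycle ∧ (∀ v, f v ≠ v) ∧ ∀ v w, E v w ↔ f v = w := by
  classical
  have hP : {σ : Perm V | ∀ v, σ v = v ∨ E v (σ v)}.ncard = #(permsOn E) := by
    rw [← Set.ncard_coe_finset]; congr; ext σ; simp [isPermOn_iff]
  have hD : {σ : Perm V | ∀ v, E v (σ v)}.ncard = #(derangementsOn E) := by
    rw [← Set.ncard_coe_finset]; congr; ext σ; simp [mem_derangementsOn_iff hE]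
  rw [hP, hD] at heq
  obtain ⟨v₀⟩ := nonempty_of_two_mul_card_eq heq
  have hshort : ∀ v, shortCycles E univ v = ∅ := fun v => shortCycles_univ_eq_empty v heq
  obtain ⟨π, hπ⟩ : ∃ π, hamCycles E univ = {π} := by
    simpa [hshort v₀, card_eq_one] using card_hamCycles_univ_eq_succ v₀ heq
  have hπH : π ∈ hamCycles E univ := hπ ▸ mem_singleton_self π
  obtain ⟨hcyc, hsupp, -⟩ := mem_hamCycles.mp hπH
  exact ⟨π, hcyc, fun v => mem_support.mp (hsupp ▸ mem_univ v),
    adj_iff_of_mem_hamCycles hE hπH hshort⟩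
end

section
/- The number of permutations on D_{k,l} equals Σ_{i=0}^{k} (C(k,i)·(k−i)!)^l. -/
/-!
A permutation `σ` of the blow-up of the functional digraph of a fixed-point-free injection `f`
is the same as the choice, in every layer `j`, of the set `S j` of vertices that `σ` moves,
together with the bijections `S j ≃ S (f j)` that `σ` induces between consecutive layers.
On the cycle `ZMod l` the bijections force all `S j` to have a common size `i`, and there are
`C(k, i)^l` such families of sets and `(i!)^l` families of bijections. Reflecting `i ↦ k - i`
gives the stated formula.
-/

open Finset Nat

theorem ZMod.forall_apply_add_one_eq_iff {β : Type*} {l : ℕ} [NeZero l] (g : ZMod l → β) :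
    (∀ j, g (j + 1) = g j) ↔ ∀ j, g j = g 0 := by
  refine ⟨fun h j => ?_, fun h j => by rw [h, h j]⟩
  obtain ⟨n, rfl⟩ := ZMod.natCast_zmod_surjective j
  induction n with
  | zero => simp
  | succ n ih => rw [Nat.cast_succ, h, ih]

theorem ZMod.prod_ite_apply_add_one_eq {R : Type*} [CommSemiring R] {l : ℕ} [NeZero l]
    (g : ZMod l → ℕ) (h : ℕ → R) (s : Finset ℕ) (hs : ∀ j, g j ∈ s) :
    ∏ j, (if g (j + 1) = g j then h (g j) else 0) =
      ∑ i ∈ s, ∏ j, (if g j = i then h i else 0) := by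
  have hvanish (i : ℕ) (hi : i ≠ g 0) : ∏ j, (if g j = i then h i else 0) = 0 :=
    prod_eq_zero (mem_univ 0) (if_neg hi.symm)
  rw [sum_eq_single_of_mem (g 0) (hs 0) fun i _ => hvanish i, Fintype.prod_ite_zero,
    Fintype.prod_ite_zero]
  simp only [ZMod.forall_apply_add_one_eq_iff g]
  split_ifs with hc
  · exact prod_congr rfl fun j _ => by rw [hc j]
  · rfl

theorem Finset.sum_ite_card_eq (α : Type*) [Fintype α] {R : Type*} [Semiring R] (i : ℕ)
    (c : R) :
    ∑ s : Finset α, (if #s = i then c else 0) = (Fintype.card α).choose i * c := by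
  rw [sum_ite, sum_const_zero, add_zero, sum_const, nsmul_eq_mul, ← Fintype.card_subtype,
    Fintype.card_finset_len]

theorem Fintype.card_equiv_eq_ite (α β : Type*) [Fintype α] [Fintype β] [DecidableEq α]
    [DecidableEq β] :
    Fintype.card (α ≃ β) = if card α = card β then (card α)! else 0 := by
  split_ifs with h
  · exact Fintype.card_equiv (Fintype.equivOfCardEq h)
  · exact Fintype.card_eq_zero_iff.mpr ⟨fun e => h (Fintype.card_congr e)⟩

def Finset.equivSubtypeFiber {α ι : Type*} (s : Finset α) (P : α × ι → Prop) (j : ι)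
    (hs : ∀ a, a ∈ s ↔ P (a, j)) : s ≃ {v : α × ι // P v ∧ v.2 = j} where
  toFun a := ⟨(a, j), (hs a).mp a.2, rfl⟩
  invFun v := ⟨v.1.1, (hs _).mpr (by obtain ⟨⟨a, _⟩, hv, rfl⟩ := v; exact hv)⟩
  left_inv _ := rfl
  right_inv := by rintro ⟨⟨a, _⟩, _, rfl⟩; rfl

/-- The vertex `(a, j)` lies in layer `j`; arcs go from layer `j` to layer `f j`. -/
def IsBlowupPerm {α ι : Type*} (f : ι → ι) (σ : Equiv.Perm (α × ι)) : Prop :=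
  ∀ v, σ v = v ∨ (σ v).2 = f v.2

abbrev LayerMatching (α : Type*) {ι : Type*} (f : ι → ι) :=
  Σ S : ι → Finset α, ∀ j, S j ≃ S (f j)

theorem card_layerMatching_zmod (α : Type*) [Fintype α] [DecidableEq α] (l : ℕ) [NeZero l] :
    Fintype.card (LayerMatching α fun j : ZMod l => j + 1) =
      ∑ i ∈ range (Fintype.card α + 1), ((Fintype.card α).choose i * i !) ^ l := by
  calc Fintype.card (LayerMatching α fun j : ZMod l => j + 1)
      = ∑ S : ZMod l → Finset α, ∏ j, if #(S (j + 1)) = #(S j) then (#(S j))! else 0 := by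
        simp only [Fintype.card_sigma, Fintype.card_pi, Fintype.card_equiv_eq_ite,
          Fintype.card_coe, eq_comm]
    _ = ∑ S : ZMod l → Finset α, ∑ i ∈ range (Fintype.card α + 1),
          ∏ j, if #(S j) = i then i ! else 0 :=
        sum_congr rfl fun S _ => ZMod.prod_ite_apply_add_one_eq (fun j => #(S j)) _ _
          fun j => mem_range_succ_iff.mpr (card_le_univ _)
    _ = ∑ i ∈ range (Fintype.card α + 1), ∏ _j : ZMod l, ∑ s : Finset α,
          if #s = i then i ! else 0 := by
        rw [sum_comm]
        simp only [Fintype.prod_sum]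
    _ = _ := by
        simp only [sum_ite_card_eq, prod_const, Finset.card_univ, ZMod.card, Nat.cast_id]

namespace LayerMatching

variable {α ι : Type*} [DecidableEq α] {f : ι → ι}

def toFun (p : LayerMatching α f) (v : α × ι) : α × ι :=
  if h : v.1 ∈ p.1 v.2 then (p.2 v.2 ⟨v.1, h⟩, f v.2) else v

theorem toFun_of_mem (p : LayerMatching α f) {a : α} {j : ι} (h : a ∈ p.1 j) :
    p.toFun (a, j) = ((p.2 j ⟨a, h⟩ : α), f j) :=
  dif_pos h

theorem toFun_of_notMem (p : LayerMatching α f) {a : α} {j : ι} (h : a ∉ p.1 j) :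
    p.toFun (a, j) = (a, j) :=
  dif_neg h

theorem mem_iff_toFun_ne (hfix : ∀ j, f j ≠ j) (p : LayerMatching α f) (a : α) (j : ι) :
    a ∈ p.1 j ↔ p.toFun (a, j) ≠ (a, j) := by
  refine ⟨fun h he => hfix j ?_, fun h => not_not.mp fun hn => h (p.toFun_of_notMem hn)⟩
  simpa only [p.toFun_of_mem h] using congrArg Prod.snd he

theorem toFun_injective (hf : Function.Injective f) (p : LayerMatching α f) :
    Function.Injective p.toFun := by
  rintro ⟨a, j⟩ ⟨b, m⟩ h
  by_cases ha : a ∈ p.1 j <;> by_cases hb : b ∈ p.1 m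
  · rw [toFun_of_mem p ha, toFun_of_mem p hb, Prod.ext_iff] at h
    obtain rfl := hf h.2
    obtain rfl := congrArg Subtype.val ((p.2 j).injective (Subtype.ext h.1))
    rfl
  · rw [toFun_of_mem p ha, toFun_of_notMem p hb, Prod.ext_iff] at h
    obtain ⟨rfl, rfl⟩ := h
    exact absurd (p.2 j ⟨a, ha⟩).2 hb
  · rw [toFun_of_notMem p ha, toFun_of_mem p hb, Prod.ext_iff] at h
    obtain ⟨rfl, rfl⟩ := h
    exact absurd (p.2 m ⟨b, hb⟩).2 ha
  · rwa [toFun_of_notMem p ha, toFun_of_notMem p hb] at h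

variable [Finite α] [Finite ι]

noncomputable def toPerm (hf : Function.Injective f) (p : LayerMatching α f) :
    Equiv.Perm (α × ι) :=
  Equiv.ofBijective p.toFun (Finite.injective_iff_bijective.mp (p.toFun_injective hf))

theorem toPerm_injective (hf : Function.Injective f) (hfix : ∀ j, f j ≠ j) :
    Function.Injective (toPerm (α := α) hf) := by
  rintro ⟨S, e⟩ ⟨S', e'⟩ h
  have hfun : toFun ⟨S, e⟩ = toFun ⟨S', e'⟩ := congrArg (⇑) h
  obtain rfl : S = S' := funext fun j => Finset.ext fun a => by
    rw [mem_iff_toFun_ne hfix ⟨S, e⟩, mem_iff_toFun_ne hfix ⟨S', e'⟩, hfun]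
  obtain rfl : e = e' := funext fun j => Equiv.ext fun ⟨a, ha⟩ => Subtype.ext <| by
    simpa only [toFun_of_mem (⟨S, _⟩ : LayerMatching α f) ha] using
      congrArg Prod.fst (congrFun hfun (a, j))
  rfl

theorem isBlowupPerm_toPerm (hf : Function.Injective f) (p : LayerMatching α f) :
    IsBlowupPerm f (p.toPerm hf) := by
  rintro ⟨a, j⟩
  by_cases h : a ∈ p.1 j
  · exact Or.inr (congrArg Prod.snd (p.toFun_of_mem h))
  · exact Or.inl (p.toFun_of_notMem h)

theorem exists_toPerm_eq (hf : Function.Injective f) {σ : Equiv.Perm (α × ι)}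
    (hσ : IsBlowupPerm f σ) : ∃ p : LayerMatching α f, p.toPerm hf = σ := by
  have := Fintype.ofFinite α
  classical
  let S (j : ι) : Finset α := univ.filter fun a => σ (a, j) ≠ (a, j)
  have hS (j : ι) (a : α) : a ∈ S j ↔ σ (a, j) ≠ (a, j) := by simp [S]
  have hlayer (j : ι) (v : α × ι) :
      σ v ≠ v ∧ v.2 = j ↔ σ (σ v) ≠ σ v ∧ (σ v).2 = f j := by
    refine ⟨fun ⟨hv, hvj⟩ => ⟨fun h => hv (σ.injective h), hvj ▸ (hσ v).resolve_left hv⟩,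
      fun ⟨hw, hwj⟩ => ?_⟩
    have hv : σ v ≠ v := fun h => hw (by rw [h, h])
    exact ⟨hv, hf (((hσ v).resolve_left hv).symm.trans hwj)⟩
  let e (j : ι) : S j ≃ S (f j) :=
    (equivSubtypeFiber (S j) (fun v => σ v ≠ v) j (hS j)).trans <|
      (σ.subtypeEquiv (hlayer j)).trans
        (equivSubtypeFiber (S (f j)) (fun v => σ v ≠ v) (f j) (hS (f j))).symm
  refine ⟨⟨S, e⟩, Equiv.ext fun ⟨a, j⟩ => ?_⟩
  by_cases ha : a ∈ S j
  · have hsnd := (hσ (a, j)).resolve_left ((hS j a).mp ha)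
    exact (toFun_of_mem _ ha).trans (Prod.ext rfl hsnd.symm)
  · exact (toFun_of_notMem _ ha).trans (not_not.mp (mt (hS j a).mpr ha)).symm

theorem range_toPerm (hf : Function.Injective f) :
    Set.range (toPerm (α := α) hf) = {σ | IsBlowupPerm f σ} :=
  Set.ext fun σ => ⟨by rintro ⟨p, rfl⟩; exact p.isBlowupPerm_toPerm hf, exists_toPerm_eq hf⟩

end LayerMatching

theorem stmt_8_general (k l : ℕ) (hl : 2 ≤ l) :
    {σ : Equiv.Perm (Fin k × ZMod l) | ∀ v, σ v = v ∨ (σ v).2 = v.2 + 1}.ncard =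
      ∑ i ∈ Finset.range (k + 1), (k.choose i * Nat.factorial (k - i)) ^ l := by
  have : NeZero l := ⟨by omega⟩
  have : Fact (1 < l) := ⟨hl⟩
  have hf : Function.Injective fun j : ZMod l => j + 1 := add_left_injective 1
  have hfix (j : ZMod l) : j + 1 ≠ j := by simp
  calc _ = Nat.card (LayerMatching (Fin k) fun j : ZMod l => j + 1) := by
        rw [← Set.ncard_range_of_injective (LayerMatching.toPerm_injective hf hfix),
          LayerMatching.range_toPerm hf]
        rfl
    _ = ∑ i ∈ range (k + 1), (k.choose i * i !) ^ l := by
        rw [Nat.card_eq_fintype_card, card_layerMatching_zmod, Fintype.card_fin]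
    _ = _ := by
        rw [← sum_range_reflect]
        refine sum_congr rfl fun i hi => ?_
        rw [add_tsub_cancel_right, choose_symm (mem_range_succ_iff.mp hi)]

/-- The number of permutations on the blowup `D_{k,l}` of a directed `l`-cycle with parts of
size `k` is `∑_{i=0}^k (C(k,i) (k-i)!)^l`. -/
theorem stmt_8 (k l : ℕ) (hk : 1 ≤ k) (hl : 2 ≤ l) :
    {σ : Equiv.Perm (Fin k × ZMod l) | ∀ v, σ v = v ∨ (σ v).2 = v.2 + 1}.ncard =
      ∑ i ∈ Finset.range (k + 1), (k.choose i * Nat.factorial (k - i)) ^ l :=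
  stmt_8_general k l hl
end

section
/- The ratio of the number of derangements on D_{k,l} to the number of permutations on D_{k,l} equals (Σ_{i=0}^{k} 1/(i!)^l)^{-1}. -/
/-!
A permutation `σ` of `D_{k,l}` either fixes a vertex or moves it to the next layer. Let `S j`
be the set of vertices of layer `j` that `σ` moves; then `σ` restricts to bijections
`S j ≃ S (j + 1)`, and conversely any such family of bijections defines a permutation. Going
once around the cycle of layers, all `S j` have a common size `m`, so there are
`∑ₘ (C(k, m) m!)^l = ∑ᵢ (k! / i!)^l` permutations. A derangement moves every vertex to the next
layer, so it is just a family of `l` permutations of a layer, and there are `(k!)^l` of them.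
-/

open Equiv Finset Nat

theorem ZMod.apply_eq_apply_zero_of_forall_apply_add_one {l : ℕ} {β : Type*}
    (f : ZMod l → β) (hf : ∀ j, f (j + 1) = f j) (j : ZMod l) : f j = f 0 := by
  obtain ⟨n, rfl⟩ := ZMod.intCast_surjective j
  induction n using Int.induction_on with
  | zero => simp
  | succ n ih => rw [Int.cast_add, Int.cast_one, hf, ih]
  | pred n ih => rw [← ih, Int.cast_sub, Int.cast_one, ← hf, sub_add_cancel]

namespace LayeredCycle

variable {α : Type*} [DecidableEq α] {l : ℕ}

def shiftPerm (g : ZMod l → Perm α) : Perm (α × ZMod l) where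
  toFun v := (g v.2 v.1, v.2 + 1)
  invFun v := ((g (v.2 - 1)).symm v.1, v.2 - 1)
  left_inv := by rintro ⟨x, j⟩; simp
  right_inv := by rintro ⟨x, j⟩; simp

theorem ncard_shift_perms [Fintype α] [NeZero l] :
    {σ : Perm (α × ZMod l) | ∀ v, (σ v).2 = v.2 + 1}.ncard = (Fintype.card α)! ^ l := by
  have hbij : Function.Bijective fun g : ZMod l → Perm α =>
      (⟨shiftPerm g, fun _ => rfl⟩ : {σ : Perm (α × ZMod l) | ∀ v, (σ v).2 = v.2 + 1}) := by
    refine ⟨fun g g' h => funext fun j => Equiv.ext fun x => ?_, fun ⟨σ, hσ⟩ => ?_⟩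
    · exact congrArg (fun σ : Set.Elem _ => (σ.1 (x, j)).1) h
    · have hinj (j : ZMod l) : Function.Injective fun x : α => (σ (x, j)).1 := fun x x' h =>
        congrArg Prod.fst (σ.injective (Prod.ext h ((hσ (x, j)).trans (hσ (x', j)).symm)))
      refine ⟨fun j => Equiv.ofBijective _ (Finite.injective_iff_bijective.mp (hinj j)), ?_⟩
      ext ⟨x, j⟩
      · simp [shiftPerm]
      · exact (hσ (x, j)).symm
  rw [← Nat.card_coe_set_eq, ← Nat.card_congr (Equiv.ofBijective _ hbij)]
  simp [Nat.card_eq_fintype_card, Fintype.card_perm]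

section Layered

variable (S : ZMod l → Finset α) (e : ∀ j, S j ≃ S (j + 1))

def layerFun (v : α × ZMod l) : α × ZMod l :=
  if h : v.1 ∈ S v.2 then ((e v.2 ⟨v.1, h⟩).1, v.2 + 1) else v

theorem layerFun_injective : Function.Injective (layerFun S e) := by
  rintro ⟨x, j⟩ ⟨x', j'⟩ h
  by_cases hx : x ∈ S j <;> by_cases hx' : x' ∈ S j' <;>
    simp only [layerFun, hx, hx', dite_true, dite_false, Prod.mk.injEq] at h
  · obtain rfl : j = j' := add_right_cancel h.2
    simpa using (e j).injective (Subtype.ext h.1)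
  · exact absurd (h.2 ▸ h.1 ▸ (e j ⟨x, hx⟩).2) hx'
  · exact absurd (h.2.symm ▸ h.1.symm ▸ (e j' ⟨x', hx'⟩).2) hx
  · rw [h.1, h.2]

variable [Finite α] [NeZero l]

noncomputable def layerPerm : Perm (α × ZMod l) :=
  Equiv.ofBijective _ (Finite.injective_iff_bijective.mp (layerFun_injective S e))

variable {S} {x : α} {j : ZMod l}

theorem layerPerm_apply_of_mem (h : x ∈ S j) : layerPerm S e (x, j) = ((e j ⟨x, h⟩).1, j + 1) :=
  dif_pos h

theorem layerPerm_apply_of_notMem (h : x ∉ S j) : layerPerm S e (x, j) = (x, j) :=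
  dif_neg h

theorem layerPerm_apply_eq_or_snd (v : α × ZMod l) :
    layerPerm S e v = v ∨ (layerPerm S e v).2 = v.2 + 1 := by
  by_cases h : v.1 ∈ S v.2
  · exact .inr (congrArg Prod.snd (layerPerm_apply_of_mem e h))
  · exact .inl (layerPerm_apply_of_notMem e h)

theorem layerPerm_injective :
    Function.Injective fun e : (∀ j, S j ≃ S (j + 1)) => layerPerm S e := by
  intro e e' h
  funext j
  ext ⟨x, hx⟩
  have := congrArg (· (x, j)) h
  simp only [layerPerm_apply_of_mem _ hx, Prod.mk.injEq] at this
  exact this.1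

variable [Fact (1 < l)] {S' : ZMod l → Finset α} {e' : ∀ j, S' j ≃ S' (j + 1)}

theorem layerPerm_apply_eq_self_iff : layerPerm S e (x, j) = (x, j) ↔ x ∉ S j := by
  refine ⟨fun hfix hx => ?_, layerPerm_apply_of_notMem e⟩
  rw [layerPerm_apply_of_mem e hx, Prod.mk.injEq, add_eq_left] at hfix
  exact one_ne_zero hfix.2

variable {e} in
theorem eq_of_layerPerm_eq (h : layerPerm S e = layerPerm S' e') : S = S' := by
  ext j x
  rw [← not_iff_not, ← layerPerm_apply_eq_self_iff e, ← layerPerm_apply_eq_self_iff e', h]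

end Layered

section Decomposition

variable [Fintype α] {σ : Perm (α × ZMod l)} {x : α} {j : ZMod l}

def movedLayer (σ : Perm (α × ZMod l)) (j : ZMod l) : Finset α := {x | σ (x, j) ≠ (x, j)}

theorem mem_movedLayer : x ∈ movedLayer σ j ↔ σ (x, j) ≠ (x, j) := by simp [movedLayer]

theorem apply_of_mem_movedLayer (hσ : ∀ v, σ v = v ∨ (σ v).2 = v.2 + 1)
    (hx : x ∈ movedLayer σ j) : σ (x, j) = ((σ (x, j)).1, j + 1) :=
  Prod.ext rfl ((hσ _).resolve_left (mem_movedLayer.mp hx))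

theorem fst_apply_mem_movedLayer (hσ : ∀ v, σ v = v ∨ (σ v).2 = v.2 + 1)
    (hx : x ∈ movedLayer σ j) : (σ (x, j)).1 ∈ movedLayer σ (j + 1) := by
  rw [mem_movedLayer, ← apply_of_mem_movedLayer hσ hx, Ne, σ.apply_eq_iff_eq]
  exact mem_movedLayer.mp hx

def movedLayerMap (hσ : ∀ v, σ v = v ∨ (σ v).2 = v.2 + 1) (j : ZMod l) (x : movedLayer σ j) :
    movedLayer σ (j + 1) :=
  ⟨(σ (x.1, j)).1, fst_apply_mem_movedLayer hσ x.2⟩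

theorem movedLayerMap_bijective (hσ : ∀ v, σ v = v ∨ (σ v).2 = v.2 + 1)
    (j : ZMod l) : Function.Bijective (movedLayerMap hσ j) := by
  refine ⟨fun ⟨x, hx⟩ ⟨x', hx'⟩ h => ?_, fun ⟨y, hy⟩ => ?_⟩
  · have : σ (x, j) = σ (x', j) := by
      rw [apply_of_mem_movedLayer hσ hx, apply_of_mem_movedLayer hσ hx']
      exact Prod.ext (congrArg Subtype.val h) rfl
    exact Subtype.ext (congrArg Prod.fst (σ.injective this))
  · obtain ⟨⟨x, j'⟩, hw⟩ : ∃ w, σ w = (y, j + 1) := ⟨_, σ.apply_symm_apply _⟩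
    have hmoved : σ (x, j') ≠ (x, j') := fun hfix =>
      mem_movedLayer.mp hy (by rw [← hfix.symm.trans hw]; exact hfix)
    obtain rfl : j' = j :=
      add_right_cancel (((hσ _).resolve_left hmoved).symm.trans (congrArg Prod.snd hw))
    exact ⟨⟨x, mem_movedLayer.mpr hmoved⟩, Subtype.ext (congrArg Prod.fst hw)⟩

variable [NeZero l]

theorem layerPerm_movedLayer (hσ : ∀ v, σ v = v ∨ (σ v).2 = v.2 + 1) :
    layerPerm (movedLayer σ) (fun j => .ofBijective _ (movedLayerMap_bijective hσ j)) = σ := by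
  ext1 ⟨x, j⟩
  by_cases hx : x ∈ movedLayer σ j
  · rw [layerPerm_apply_of_mem _ hx]
    exact (apply_of_mem_movedLayer hσ hx).symm
  · rw [layerPerm_apply_of_notMem _ hx]
    exact (not_not.mp (mt mem_movedLayer.mpr hx)).symm

end Decomposition

section Counting

variable (α l) [Fintype α]

abbrev LayerData : Type _ :=
  Σ m : Fin (Fintype.card α + 1), Σ S : ZMod l → {s : Finset α // s.card = m},
    ∀ j, (S j).1 ≃ (S (j + 1)).1

theorem card_layerData [NeZero l] :
    Fintype.card (LayerData α l) =
      ∑ m ∈ range (Fintype.card α + 1), ((Fintype.card α).choose m * m !) ^ l := by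
  rw [Fintype.card_sigma, ← Fin.sum_univ_eq_sum_range]
  refine Fintype.sum_congr _ _ fun m => ?_
  have hequiv (S : ZMod l → {s : Finset α // s.card = m}) (j : ZMod l) :
      Fintype.card ((S j).1 ≃ (S (j + 1)).1) = m.1 ! := by
    rw [Fintype.card_equiv (Fintype.equivOfCardEq (by simp [(S j).2, (S (j + 1)).2]))]
    simp [(S j).2]
  simp [Fintype.card_sigma, Fintype.card_pi, hequiv, Fintype.card_finset_len, mul_pow]

variable {α l} [Fact (1 < l)]

theorem layerData_bijective :
    Function.Bijective fun d : LayerData α l =>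
      (⟨layerPerm (fun j => (d.2.1 j).1) d.2.2, layerPerm_apply_eq_or_snd _⟩ :
        {σ : Perm (α × ZMod l) | ∀ v, σ v = v ∨ (σ v).2 = v.2 + 1}) := by
  refine ⟨fun ⟨m, S, e⟩ ⟨m', S', e'⟩ h => ?_, fun ⟨σ, hσ⟩ => ?_⟩
  · replace h := congrArg Subtype.val h
    dsimp only at h
    have hS := congrFun (eq_of_layerPerm_eq h)
    obtain rfl : m = m' := Fin.ext ((S 0).2.symm.trans (hS 0 ▸ (S' 0).2))
    obtain rfl : S = S' := funext fun j => Subtype.ext (hS j)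
    obtain rfl := layerPerm_injective h
    rfl
  · have hcard := ZMod.apply_eq_apply_zero_of_forall_apply_add_one (fun j => #(movedLayer σ j))
      fun j => (Finset.card_eq_of_equiv (.ofBijective _ (movedLayerMap_bijective hσ j))).symm
    exact ⟨⟨⟨_, Nat.lt_succ_of_le (card_le_univ _)⟩, fun j => ⟨_, hcard j⟩, _⟩,
      Subtype.ext (layerPerm_movedLayer hσ)⟩

theorem ncard_fix_or_shift_perms :
    {σ : Perm (α × ZMod l) | ∀ v, σ v = v ∨ (σ v).2 = v.2 + 1}.ncard =
      ∑ m ∈ range (Fintype.card α + 1), ((Fintype.card α).choose m * m !) ^ l := by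
  rw [← Nat.card_coe_set_eq, ← Nat.card_congr (Equiv.ofBijective _ layerData_bijective),
    Nat.card_eq_fintype_card, card_layerData]

end Counting

theorem sum_choose_mul_factorial_pow (k l : ℕ) :
    ((∑ m ∈ range (k + 1), (k.choose m * m !) ^ l : ℕ) : ℚ) =
      (k ! : ℚ) ^ l * ∑ i ∈ range (k + 1), 1 / (i ! : ℚ) ^ l := by
  push_cast
  rw [mul_sum, ← sum_range_reflect]
  refine sum_congr rfl fun i hi => ?_
  have hik : i ≤ k := Nat.lt_succ_iff.mp (mem_range.mp hi)
  have hfac := Nat.choose_mul_factorial_mul_factorial (Nat.sub_le k i)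
  rw [Nat.sub_sub_self hik] at hfac
  have : (k.choose (k - i) * (k - i)! : ℚ) = k ! / i ! := by
    rw [eq_div_iff (by positivity), ← hfac]
    push_cast
    ring
  rw [show k + 1 - 1 - i = k - i by omega, this, div_pow, div_eq_mul_one_div]

end LayeredCycle

open LayeredCycle in
theorem stmt_9_general (k l : ℕ) (hl : 2 ≤ l) :
    ({σ : Equiv.Perm (Fin k × ZMod l) | ∀ v, (σ v).2 = v.2 + 1}.ncard : ℚ) /
      ({σ : Equiv.Perm (Fin k × ZMod l) | ∀ v, σ v = v ∨ (σ v).2 = v.2 + 1}.ncard : ℚ) =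
      (∑ i ∈ Finset.range (k + 1), (1 : ℚ) / (Nat.factorial i) ^ l)⁻¹ := by
  have : Fact (1 < l) := ⟨hl⟩
  rw [ncard_shift_perms, ncard_fix_or_shift_perms, Fintype.card_fin, sum_choose_mul_factorial_pow,
    Nat.cast_pow, div_mul_cancel_left₀ (by positivity)]

/-- The derangement-to-permutation ratio of `D_{k,l}` equals `(∑_{i=0}^k 1/(i!)^l)⁻¹`. -/
theorem stmt_9 (k l : ℕ) (hk : 1 ≤ k) (hl : 2 ≤ l) :
    ({σ : Equiv.Perm (Fin k × ZMod l) | ∀ v, (σ v).2 = v.2 + 1}.ncard : ℚ) /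
      ({σ : Equiv.Perm (Fin k × ZMod l) | ∀ v, σ v = v ∨ (σ v).2 = v.2 + 1}.ncard : ℚ) =
      (∑ i ∈ Finset.range (k + 1), (1 : ℚ) / (Nat.factorial i) ^ l)⁻¹ :=
  stmt_9_general k l hl
end

section
/- Let M be an n×n matrix over a commutative ring and let 0 ≤ k ≤ n. Then C(n,k)·per(M) = Σ_{S,S'} per(M(S,S'))·per(M(S̄,S̄')), where the sum is over all pairs of k-element subsets S, S' of [n]. -/
/-!
Fix a `k`-set `S` of rows. Every permutation `σ` maps `S` onto exactly one `k`-set `S' = σ(S)`,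
and the permutations with `σ(S) = S'` are exactly the pairs of bijections `S → S'` and
`Sᶜ → S'ᶜ` glued together, so `per(M(S,S')) · per(M(S̄,S̄'))` is the part of `per M` coming from
that fibre. Summing over `S'` therefore gives `per M` for each of the `C(n,k)` choices of `S`.
-/

open Finset

/-- The permanent of the submatrix of `M` with rows `S` and columns `S'`,
computed as a sum over bijections from `S` to `S'`. -/
def subPer {n : ℕ} {R : Type*} [CommRing R] (M : Matrix (Fin n) (Fin n) R)
    (S S' : Finset (Fin n)) : R :=
  ∑ e : {x // x ∈ S} ≃ {x // x ∈ S'}, ∏ i : {x // x ∈ S}, M i (e i)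

namespace Equiv

variable {α : Type*} (p q : α → Prop) [DecidablePred p] [DecidablePred q]

def subtypeCongrEquiv :
    ({x // p x} ≃ {x // q x}) × ({x // ¬p x} ≃ {x // ¬q x}) ≃
      {σ : Perm α // ∀ a, p a ↔ q (σ a)} where
  toFun ef := ⟨subtypeCongr ef.1 ef.2, fun a => by
    by_cases h : p a <;> simp [subtypeCongr, h, (ef.1 ⟨a, _⟩).2, (ef.2 ⟨a, _⟩).2]⟩
  invFun σ := (σ.1.subtypeEquiv σ.2, σ.1.subtypeEquiv fun a => not_congr (σ.2 a))
  left_inv ef := by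
    ext a <;> simp [subtypeCongr, a.2]
  right_inv σ := by
    ext a
    by_cases h : p a <;> simp [subtypeCongr, h]

theorem subtypeCongrEquiv_apply (ef : ({x // p x} ≃ {x // q x}) × ({x // ¬p x} ≃ {x // ¬q x})) :
    (subtypeCongrEquiv p q ef : Perm α) = subtypeCongr ef.1 ef.2 := rfl

end Equiv

theorem Fintype.sum_prod_mul_prod_eq_sum_perm_subtype {α R : Type*} [Fintype α] [DecidableEq α]
    [CommSemiring R] (p q : α → Prop) [DecidablePred p] [DecidablePred q] (f : α → α → R) :
    ∑ ef : ({x // p x} ≃ {x // q x}) × ({x // ¬p x} ≃ {x // ¬q x}),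
        (∏ i : {x // p x}, f i (ef.1 i)) * ∏ i : {x // ¬p x}, f i (ef.2 i) =
      ∑ σ : {σ : Equiv.Perm α // ∀ a, p a ↔ q (σ a)}, ∏ i, f i (σ.1 i) := by
  refine Fintype.sum_equiv (Equiv.subtypeCongrEquiv p q) _ _ fun ef => ?_
  rw [Equiv.subtypeCongrEquiv_apply, ← Fintype.prod_subtype_mul_prod_subtype p]
  simp [Equiv.subtypeCongr]

theorem Finset.map_equiv_eq_iff {α β : Type*} (e : α ≃ β) (s : Finset α) (t : Finset β) :
    s.map e.toEmbedding = t ↔ ∀ a, a ∈ s ↔ e a ∈ t := by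
  rw [Finset.ext_iff, e.symm.forall_congr_left]
  simp

section

variable {n : ℕ} {R : Type*} [CommRing R] (M : Matrix (Fin n) (Fin n) R)

theorem subPer_compl (S S' : Finset (Fin n)) :
    subPer M Sᶜ S'ᶜ = ∑ e : {x // x ∉ S} ≃ {x // x ∉ S'}, ∏ i : {x // x ∉ S}, M i (e i) := by
  let g : ∀ T : Finset (Fin n), {x // x ∈ Tᶜ} ≃ {x // x ∉ T} :=
    fun T => Equiv.subtypeEquivRight fun _ => mem_compl
  refine Fintype.sum_equiv ((g S).equivCongr (g S')) _ _ fun e => ?_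
  exact Fintype.prod_equiv (g S) _ _ fun _ => rfl

theorem subPer_mul_subPer_compl (S S' : Finset (Fin n)) :
    subPer M S S' * subPer M Sᶜ S'ᶜ =
      ∑ σ : Equiv.Perm (Fin n) with S.map σ.toEmbedding = S', ∏ i, M i (σ i) := by
  rw [subPer, subPer_compl, sum_mul_sum, ← Fintype.sum_prod_type']
  rw [sum_subtype (p := fun σ : Equiv.Perm (Fin n) => ∀ a, a ∈ S ↔ σ a ∈ S') _
    (fun σ => by simp [Finset.map_equiv_eq_iff])]
  convert Fintype.sum_prod_mul_prod_eq_sum_perm_subtype (· ∈ S) (· ∈ S') M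

theorem sum_subPer_mul_subPer_compl (S : Finset (Fin n)) :
    ∑ S' ∈ powersetCard #S univ, subPer M S S' * subPer M Sᶜ S'ᶜ =
      ∑ σ : Equiv.Perm (Fin n), ∏ i, M i (σ i) := by
  simp only [subPer_mul_subPer_compl]
  exact sum_fiberwise_of_maps_to (fun σ _ => by simp) _

end

theorem stmt_10_general {n : ℕ} {R : Type*} [CommRing R] (M : Matrix (Fin n) (Fin n) R)
    (k : ℕ) :
    (n.choose k : R) * ∑ σ : Equiv.Perm (Fin n), ∏ i, M i (σ i) =
      ∑ S ∈ powersetCard k (univ : Finset (Fin n)),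
        ∑ S' ∈ powersetCard k (univ : Finset (Fin n)),
          subPer M S S' * subPer M Sᶜ S'ᶜ := by
  have hS : ∀ S ∈ powersetCard k (univ : Finset (Fin n)),
      ∑ S' ∈ powersetCard k univ, subPer M S S' * subPer M Sᶜ S'ᶜ =
        ∑ σ : Equiv.Perm (Fin n), ∏ i, M i (σ i) := fun S hS => by
    rw [← (mem_powersetCard.mp hS).2, sum_subPer_mul_subPer_compl]
  rw [sum_congr rfl hS, sum_const, card_powersetCard, card_univ, Fintype.card_fin, nsmul_eq_mul]

/-- `C(n,k) · per M = ∑_{S,S'} per(M(S,S')) · per(M(S̄,S̄'))`, the sum over pairs of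
`k`-element subsets of row and column indices. -/
theorem stmt_10 {n : ℕ} {R : Type*} [CommRing R] (M : Matrix (Fin n) (Fin n) R)
    (k : ℕ) (hk : k ≤ n) :
    (n.choose k : R) * ∑ σ : Equiv.Perm (Fin n), ∏ i, M i (σ i) =
      ∑ S ∈ powersetCard k (univ : Finset (Fin n)),
        ∑ S' ∈ powersetCard k (univ : Finset (Fin n)),
          subPer M S S' * subPer M Sᶜ S'ᶜ :=
  stmt_10_general M k
end

section
/- Let G be a balanced bipartite graph on parts of size n. Then the ratio of the number of derangements on G to the number of permutations on G is at most (Σ_{k=0}^{n} 1/(k!)^2)^{-1}, with equality if and only if G is the complete bipartite graph K_{n,n}. -/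
/-!
Because `G` is bipartite, a permutation on `G` swaps a set `S` of left vertices with a set `T`
of right vertices, acting on `S` by one perfect matching `S → T` and on `T` by the inverse of
another. Writing `m(S, T)` for the number of perfect matchings between `S` and `T`, there are
therefore `∑_{S,T} m(S,T)²` permutations and `m(A,B)²` derangements on `G`, where `A` and `B`
are the two parts.

Expanding `m(A,B)` along a fixed `k`-set `S` (the Laplace expansion of the permanent of the
biadjacency matrix) and bounding `m(Sᶜ,Tᶜ) ≤ (n-k)!` gives `m(A,B) ≤ (n-k)! ∑_T m(S,T)`.
Averaging over `S` and applying Cauchy–Schwarz yields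
`m(A,B)² / (n-k)!² ≤ ∑_{|S|=|T|=k} m(S,T)²`, and summing over `k` is the inequality. The term
`k = 0` reads `m(A,B) ≤ n!`, which is strict unless `G = K_{n,n}`; for `K_{n,n}` every term is an
equality.
-/

open Finset Nat

lemma Nat.card_eq_sum_card_fiber {X Y : Type*} [Finite X] [Fintype Y] (f : X → Y) :
    Nat.card X = ∑ y, Nat.card {x // f x = y} := by
  rw [← Nat.card_sigma, Nat.card_congr (Equiv.sigmaFiberEquiv f)]

namespace BipartitePerm

open Equiv

variable {α β : Type*}

section RelEquiv

variable {R : α → β → Prop}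

lemma card_relEquiv_eq_zero (h : Nat.card α ≠ Nat.card β) :
    Nat.card {e : α ≃ β // ∀ a, R a (e a)} = 0 :=
  have : IsEmpty {e : α ≃ β // ∀ a, R a (e a)} := ⟨fun e => h (Nat.card_congr e.1)⟩
  Nat.card_of_isEmpty

variable [Finite α] [Finite β]

lemma card_equiv_of_card_eq (h : Nat.card α = Nat.card β) :
    Nat.card (α ≃ β) = (Nat.card α)! := by
  classical
  cases nonempty_fintype α; cases nonempty_fintype β
  obtain ⟨e⟩ := Finite.card_eq.1 h
  simp only [Nat.card_eq_fintype_card, Fintype.card_equiv e]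

lemma card_relEquiv_le : Nat.card {e : α ≃ β // ∀ a, R a (e a)} ≤ (Nat.card α)! := by
  by_cases h : Nat.card α = Nat.card β
  · exact card_equiv_of_card_eq h ▸ Finite.card_subtype_le _
  · simp [card_relEquiv_eq_zero h]

lemma card_relEquiv_of_forall (h : Nat.card α = Nat.card β) (hR : ∀ a b, R a b) :
    Nat.card {e : α ≃ β // ∀ a, R a (e a)} = (Nat.card α)! := by
  rw [Nat.card_congr (subtypeUnivEquiv (p := fun e : α ≃ β => ∀ a, R a (e a))
    fun e a => hR a (e a)), card_equiv_of_card_eq h]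

lemma card_relEquiv_lt (h : Nat.card α = Nat.card β) {a : α} {b : β} (hab : ¬ R a b) :
    Nat.card {e : α ≃ β // ∀ a, R a (e a)} < (Nat.card α)! := by
  classical
  obtain ⟨e⟩ := Finite.card_eq.1 h
  rw [← card_equiv_of_card_eq h]
  refine Finite.card_subtype_lt (x := e.trans (swap (e a) b)) fun hR => hab ?_
  simpa using hR a

end RelEquiv

abbrev Matching (R : α → β → Prop) (s : Set α) (t : Set β) : Type _ :=
  {e : s ≃ t // ∀ x : s, R x (e x)}

section Laplace

variable {R : α → β → Prop}

variable (R) in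
def matchingSplit (s : Set α) (t : Set β) [DecidablePred (· ∈ s)] [DecidablePred (· ∈ t)] :
    {e : α ≃ β // (∀ a, R a (e a)) ∧ ∀ a, a ∈ s ↔ e a ∈ t} ≃
      Matching R s t × Matching R sᶜ tᶜ where
  toFun e := (⟨e.1.subtypeEquiv e.2.2, fun x => e.2.1 x⟩,
    ⟨e.1.subtypeEquiv fun a => not_congr (e.2.2 a), fun x => e.2.1 x⟩)
  invFun p :=
    ⟨(Set.sumCompl s).symm.trans ((p.1.1.sumCongr p.2.1).trans (Set.sumCompl t)), by
      refine ⟨fun a => ?_, fun a => ?_⟩ <;> by_cases ha : a ∈ s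
      · simpa [Set.sumCompl_symm_apply_of_mem ha] using p.1.2 ⟨a, ha⟩
      · simpa [Set.sumCompl_symm_apply_of_notMem ha] using p.2.2 ⟨a, ha⟩
      · simp [Set.sumCompl_symm_apply_of_mem ha, ha]
      · simp only [Set.sumCompl_symm_apply_of_notMem ha, coe_trans, Function.comp_apply,
          sumCongr_apply, Sum.map_inr, Set.sumCompl_apply_inr, ha, false_iff]
        exact (p.2.1 ⟨a, ha⟩).2⟩
  left_inv e := by
    ext a
    by_cases ha : a ∈ s
    · simp [Set.sumCompl_symm_apply_of_mem ha]
    · simp [Set.sumCompl_symm_apply_of_notMem ha]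
  right_inv p := by
    ext <;> simp

lemma card_matching_eq_zero {S : Finset α} {T : Finset β} (h : #S ≠ #T) :
    Nat.card (Matching R S T) = 0 :=
  card_relEquiv_eq_zero (R := fun (x : (S : Set α)) (y : (T : Set β)) => R x y)
    (by simpa [Nat.card_coe_set_eq] using h)

lemma card_matching_univ [Fintype α] [Fintype β] :
    Nat.card (Matching R ↑(univ : Finset α) ↑(univ : Finset β)) =
      Nat.card {e : α ≃ β // ∀ a, R a (e a)} :=
  Nat.card_congr <| subtypeEquiv
    ((subtypeUnivEquiv fun a => mem_univ a).equivCongr (subtypeUnivEquiv fun b => mem_univ b))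
    fun _ => by simp

-- The Laplace expansion of the permanent of `R` along the rows in `S`.
theorem card_relEquiv_eq_sum [Fintype α] [Fintype β] (S : Finset α) :
    Nat.card {e : α ≃ β // ∀ a, R a (e a)} = ∑ T ∈ powersetCard #S (univ : Finset β),
      Nat.card (Matching R S T) * Nat.card (Matching R (S : Set α)ᶜ (T : Set β)ᶜ) := by
  classical
  have hfiber (T : Finset β) :
      Nat.card {e : {e : α ≃ β // ∀ a, R a (e a)} // S.map e.1.toEmbedding = T} =
        Nat.card (Matching R S T) * Nat.card (Matching R (S : Set α)ᶜ (T : Set β)ᶜ) := by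
    rw [← Nat.card_prod, ← Nat.card_congr (matchingSplit R S T)]
    refine Nat.card_congr ((subtypeSubtypeEquivSubtypeInter _ (fun e : α ≃ β =>
      S.map e.toEmbedding = T)).trans (subtypeEquivRight fun e => and_congr_right fun _ => ?_))
    simp only [Finset.ext_iff, mem_map_equiv, Finset.mem_coe]
    exact ⟨fun h a => by simpa using h (e a), fun h b => by simpa using h (e.symm b)⟩
  rw [Nat.card_eq_sum_card_fiber
    fun e : {e : α ≃ β // ∀ a, R a (e a)} => S.map e.1.toEmbedding]
  simp only [hfiber]
  refine (sum_subset (subset_univ _) fun T _ hT => ?_).symm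
  rw [card_matching_eq_zero (by simpa [eq_comm] using hT), zero_mul]

end Laplace

section Glue

variable {s : Set α} {t : Set β} [DecidablePred (· ∈ s)] [DecidablePred (· ∈ t)]

def glueFun (f g : s ≃ t) : α ⊕ β → α ⊕ β :=
  Sum.elim (fun a => if h : a ∈ s then .inr (f ⟨a, h⟩) else .inl a)
    (fun b => if h : b ∈ t then .inl (g.symm ⟨b, h⟩) else .inr b)

lemma glueFun_leftInverse (f g : s ≃ t) : Function.LeftInverse (glueFun g f) (glueFun f g) := by
  rintro (a | b)
  · by_cases h : a ∈ s <;> simp [glueFun, h]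
  · by_cases h : b ∈ t <;> simp [glueFun, h]

def glue (f g : s ≃ t) : Perm (α ⊕ β) :=
  ⟨glueFun f g, glueFun g f, glueFun_leftInverse f g, glueFun_leftInverse g f⟩

variable (f g : s ≃ t)

lemma glue_inl_of_mem {a : α} (h : a ∈ s) : glue f g (.inl a) = .inr (f ⟨a, h⟩) := by
  simp [glue, glueFun, h]

lemma glue_inl_of_notMem {a : α} (h : a ∉ s) : glue f g (.inl a) = .inl a := by
  simp [glue, glueFun, h]

lemma glue_inr_of_mem {b : β} (h : b ∈ t) : glue f g (.inr b) = .inl (g.symm ⟨b, h⟩) := by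
  simp [glue, glueFun, h]

lemma glue_inr_of_notMem {b : β} (h : b ∉ t) : glue f g (.inr b) = .inr b := by
  simp [glue, glueFun, h]

end Glue

section Cross

variable {s : Set α} {t : Set β} (σ : Perm (α ⊕ β))
  (h : ∀ v, v ∈ Sum.inl '' s ↔ σ v ∈ Sum.inr '' t)

noncomputable def crossEquiv : s ≃ t :=
  (Equiv.Set.image _ s Sum.inl_injective).trans
    ((σ.subtypeEquiv h).trans (Equiv.Set.image _ t Sum.inr_injective).symm)

lemma inr_crossEquiv (x : s) : Sum.inr (crossEquiv σ h x : β) = σ (.inl x) :=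
  congrArg Subtype.val ((Equiv.Set.image _ t Sum.inr_injective).apply_symm_apply _)

lemma crossEquiv_glue [DecidablePred (· ∈ s)] [DecidablePred (· ∈ t)] (f g : s ≃ t)
    (h : ∀ v, v ∈ Sum.inl '' s ↔ glue f g v ∈ Sum.inr '' t) :
    crossEquiv (glue f g) h = f := by
  ext x
  exact Sum.inr_injective ((inr_crossEquiv _ h x).trans (glue_inl_of_mem f g x.2))

end Cross

section Graph

variable {G : SimpleGraph (α ⊕ β)} {σ : Perm (α ⊕ β)}

def IsPermOn (G : SimpleGraph (α ⊕ β)) (σ : Perm (α ⊕ β)) : Prop :=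
  ∀ v, σ v = v ∨ G.Adj v (σ v)

abbrev biadj (G : SimpleGraph (α ⊕ β)) (a : α) (b : β) : Prop := G.Adj (.inl a) (.inr b)

lemma IsPermOn.inv (hσ : IsPermOn G σ) : IsPermOn G σ⁻¹ := by
  intro v
  rcases hσ (σ⁻¹ v) with h | h
  · exact .inl (by simpa [eq_comm] using h)
  · exact .inr (by simpa using h.symm)

lemma IsPermOn.exists_inr (hG : G ≤ completeBipartiteGraph α β) (hσ : IsPermOn G σ) {a : α}
    (ha : σ (.inl a) ≠ .inl a) : ∃ b, σ (.inl a) = .inr b := by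
  have := hG ((hσ _).resolve_left ha)
  cases h : σ (.inl a) <;> simp_all

lemma IsPermOn.exists_inl (hG : G ≤ completeBipartiteGraph α β) (hσ : IsPermOn G σ) {b : β}
    (hb : σ (.inr b) ≠ .inr b) : ∃ a, σ (.inr b) = .inl a := by
  have := hG ((hσ _).resolve_left hb)
  cases h : σ (.inr b) <;> simp_all

lemma IsPermOn.adj_crossEquiv {s : Set α} {t : Set β} (hσ : IsPermOn G σ)
    (h : ∀ v, v ∈ Sum.inl '' s ↔ σ v ∈ Sum.inr '' t) (x : s) :
    biadj G x (crossEquiv σ h x) := by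
  have hx := inr_crossEquiv σ h x
  rw [biadj, hx]
  exact (hσ _).resolve_left (hx ▸ Sum.inr_ne_inl)

lemma isPermOn_glue {s : Set α} {t : Set β} [DecidablePred (· ∈ s)] [DecidablePred (· ∈ t)]
    (f g : Matching (biadj G) s t) : IsPermOn G (glue f.1 g.1) := by
  rintro (a | b)
  · by_cases h : a ∈ s
    · exact .inr (glue_inl_of_mem f.1 g.1 h ▸ f.2 ⟨a, h⟩)
    · exact .inl (glue_inl_of_notMem f.1 g.1 h)
  · by_cases h : b ∈ t
    · rw [glue_inr_of_mem f.1 g.1 h]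
      simpa using (g.2 (g.1.symm ⟨b, h⟩)).symm
    · exact .inl (glue_inr_of_notMem f.1 g.1 h)

variable [Fintype α] [Fintype β] [DecidableEq α] [DecidableEq β]

lemma IsPermOn.mem_image_inl_iff (hG : G ≤ completeBipartiteGraph α β) (hσ : IsPermOn G σ)
    {S : Finset α} {T : Finset β} (hS : σ.support.toLeft = S) (hT : σ.support.toRight = T)
    (v : α ⊕ β) : v ∈ Sum.inl '' ↑S ↔ σ v ∈ Sum.inr '' ↑T := by
  subst hS hT
  simp only [Set.mem_image, Finset.mem_coe, mem_toLeft, mem_toRight, Perm.mem_support]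
  rcases v with a | b
  · simp only [Sum.inl.injEq, exists_eq_right]
    constructor
    · intro ha
      obtain ⟨b, hb⟩ := hσ.exists_inr hG ha
      exact ⟨b, fun hfix => Sum.inr_ne_inl (σ.injective (hfix.trans hb.symm)), hb.symm⟩
    · rintro ⟨b, -, hb⟩
      exact hb ▸ Sum.inr_ne_inl
  · simp only [reduceCtorEq, and_false, exists_false, false_iff, not_exists, not_and]
    intro b' hb' hσb
    by_cases hb : σ (.inr b) = .inr b
    · obtain rfl : b' = b := Sum.inr_injective (hσb.trans hb)
      exact hb' hb
    · obtain ⟨a, ha⟩ := hσ.exists_inl hG hb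
      exact Sum.inr_ne_inl (hσb.trans ha)

lemma support_glue {S : Finset α} {T : Finset β} (f g : (S : Set α) ≃ (T : Set β)) :
    (glue f g).support.toLeft = S ∧ (glue f g).support.toRight = T := by
  constructor
  · ext a
    by_cases h : a ∈ S
    · simp [Perm.mem_support, h, glue_inl_of_mem f g (s := (S : Set α)) h]
    · simp [Perm.mem_support, h, glue_inl_of_notMem f g (s := (S : Set α)) h]
  · ext b
    by_cases h : b ∈ T
    · simp [Perm.mem_support, h, glue_inr_of_mem f g (t := (T : Set β)) h]
    · simp [Perm.mem_support, h, glue_inr_of_notMem f g (t := (T : Set β)) h]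

lemma glue_crossEquiv {S : Finset α} {T : Finset β} (hS : σ.support.toLeft = S)
    (hT : σ.support.toRight = T) (h : ∀ v, v ∈ Sum.inl '' ↑S ↔ σ v ∈ Sum.inr '' ↑T)
    (h' : ∀ v, v ∈ Sum.inl '' ↑S ↔ σ⁻¹ v ∈ Sum.inr '' ↑T) :
    glue (crossEquiv σ h) (crossEquiv σ⁻¹ h') = σ := by
  ext (a | b) : 1
  · by_cases ha : a ∈ S
    · exact (glue_inl_of_mem _ _ ha).trans (inr_crossEquiv σ h ⟨a, ha⟩)
    · rw [glue_inl_of_notMem _ _ ha, eq_comm]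
      simpa [← hS, Perm.mem_support] using ha
  · by_cases hb : b ∈ T
    · rw [glue_inr_of_mem _ _ hb, eq_comm, ← σ.eq_inv_iff_eq, ← inr_crossEquiv σ⁻¹ h',
        apply_symm_apply]
    · rw [glue_inr_of_notMem _ _ hb, eq_comm]
      simpa [← hT, Perm.mem_support] using hb

noncomputable def permOnFiberEquiv (hG : G ≤ completeBipartiteGraph α β)
    (S : Finset α) (T : Finset β) :
    {σ : {σ : Perm (α ⊕ β) // IsPermOn G σ} //
        (σ.1.support.toLeft, σ.1.support.toRight) = (S, T)} ≃
      Matching (biadj G) S T × Matching (biadj G) S T where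
  toFun σ :=
    have hST := Prod.mk_inj.1 σ.2
    (⟨crossEquiv σ.1.1 (σ.1.2.mem_image_inl_iff hG hST.1 hST.2), σ.1.2.adj_crossEquiv _⟩,
      ⟨crossEquiv σ.1.1⁻¹ (σ.1.2.inv.mem_image_inl_iff hG (by rw [Perm.support_inv, hST.1])
        (by rw [Perm.support_inv, hST.2])), σ.1.2.inv.adj_crossEquiv _⟩)
  invFun p := ⟨⟨glue p.1.1 p.2.1, isPermOn_glue p.1 p.2⟩,
    Prod.ext (support_glue _ _).1 (support_glue _ _).2⟩
  left_inv σ := Subtype.ext <| Subtype.ext <|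
    glue_crossEquiv (Prod.mk_inj.1 σ.2).1 (Prod.mk_inj.1 σ.2).2 _ _
  right_inv p :=
    Prod.ext (Subtype.ext (crossEquiv_glue _ _ _)) (Subtype.ext (crossEquiv_glue _ _ _))

lemma forall_adj_iff_isPermOn : (∀ v, G.Adj v (σ v)) ↔
    IsPermOn G σ ∧ (σ.support.toLeft, σ.support.toRight) = (univ, univ) := by
  simp only [IsPermOn, Prod.mk.injEq, Finset.eq_univ_iff_forall, mem_toLeft, mem_toRight,
    Perm.mem_support]
  refine ⟨fun h => ⟨fun v => .inr (h v), fun a => (h _).ne', fun b => (h _).ne'⟩, ?_⟩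
  rintro ⟨h, hl, hr⟩ (a | b)
  exacts [(h _).resolve_left (hl a), (h _).resolve_left (hr b)]

end Graph

section GraphCount

variable [Fintype α] [Fintype β] {G : SimpleGraph (α ⊕ β)}

theorem card_isPermOn_eq_sum (hG : G ≤ completeBipartiteGraph α β) :
    Nat.card {σ // IsPermOn G σ} =
      ∑ S : Finset α, ∑ T : Finset β, Nat.card (Matching (biadj G) S T) ^ 2 := by
  classical
  rw [Nat.card_eq_sum_card_fiber fun σ : {σ // IsPermOn G σ} =>
    (σ.1.support.toLeft, σ.1.support.toRight), Fintype.sum_prod_type]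
  simp only [Nat.card_congr (permOnFiberEquiv hG _ _), Nat.card_prod, sq]

theorem card_forall_adj_eq_sq (hG : G ≤ completeBipartiteGraph α β) :
    Nat.card {σ : Perm (α ⊕ β) // ∀ v, G.Adj v (σ v)} =
      Nat.card {e : α ≃ β // ∀ a, biadj G a (e a)} ^ 2 := by
  classical
  rw [← card_matching_univ (R := biadj G), sq, ← Nat.card_prod,
    ← Nat.card_congr (permOnFiberEquiv hG univ univ)]
  exact Nat.card_congr ((subtypeEquivRight fun σ => forall_adj_iff_isPermOn).trans
    (subtypeSubtypeEquivSubtypeInter _ _).symm)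

end GraphCount

section Count

variable [Fintype α] [Fintype β] (R : α → β → Prop) {n : ℕ}

noncomputable def sqMatchingSum (k : ℕ) : ℕ :=
  ∑ S ∈ powersetCard k (univ : Finset α), ∑ T ∈ powersetCard k (univ : Finset β),
    Nat.card (Matching R S T) ^ 2

lemma sum_sq_card_matching_eq (hα : Fintype.card α = n) :
    ∑ S : Finset α, ∑ T : Finset β, Nat.card (Matching R S T) ^ 2 =
      ∑ k ∈ range (n + 1), sqMatchingSum R k := by
  rw [← Finset.powerset_univ, sum_powerset, Finset.card_univ, hα]
  refine sum_congr rfl fun k _ => sum_congr rfl fun S hS => ?_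
  refine (sum_subset (subset_univ _) fun T _ hT => ?_).symm
  rw [card_matching_eq_zero (by simp_all [eq_comm]), zero_pow two_ne_zero]

lemma sqMatchingSum_zero : sqMatchingSum R 0 = 1 := by
  simp only [sqMatchingSum, powersetCard_zero, sum_singleton, coe_empty]
  rw [card_relEquiv_of_forall (R := fun (x : (∅ : Set α)) (y : (∅ : Set β)) => R x y)
    (by simp) (by simp)]
  simp

lemma sqMatchingSum_of_forall (hα : Fintype.card α = n) (hβ : Fintype.card β = n)
    (hR : ∀ a b, R a b) (k : ℕ) : sqMatchingSum R k = (n.choose k * k !) ^ 2 := by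
  have hm : ∀ S ∈ powersetCard k (univ : Finset α),
      ∀ T ∈ powersetCard k (univ : Finset β), Nat.card (Matching R S T) = k ! := by
    intro S hS T hT
    rw [mem_powersetCard_univ] at hS hT
    rw [card_relEquiv_of_forall (R := fun (x : (S : Set α)) (y : (T : Set β)) => R x y)
      (by simp [hS, hT]) fun a b => hR a b, Nat.card_coe_set_eq, Set.ncard_coe_finset, hS]
  rw [sqMatchingSum, sum_congr rfl fun S hS => sum_congr rfl fun T hT => by rw [hm S hS T hT]]
  simp [hα, hβ, sq]
  ring

lemma card_relEquiv_le_sum (hα : Fintype.card α = n) (S : Finset α) :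
    Nat.card {e : α ≃ β // ∀ a, R a (e a)} ≤
      (n - #S)! * ∑ T ∈ powersetCard #S (univ : Finset β), Nat.card (Matching R S T) := by
  rw [card_relEquiv_eq_sum S, mul_sum]
  refine sum_le_sum fun T _ => ?_
  rw [mul_comm]
  refine Nat.mul_le_mul_right _ ?_
  convert card_relEquiv_le
    (R := fun (x : ((S : Set α)ᶜ : Set α)) (y : ((T : Set β)ᶜ : Set β)) => R x y) using 2
  classical
  rw [← coe_compl, Nat.card_coe_set_eq, Set.ncard_coe_finset, card_compl, hα]

theorem sq_card_relEquiv_le (hα : Fintype.card α = n) (hβ : Fintype.card β = n) {k : ℕ}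
    (hk : k ≤ n) :
    Nat.card {e : α ≃ β // ∀ a, R a (e a)} ^ 2 ≤ (n - k)! ^ 2 * sqMatchingSum R k := by
  set a := Nat.card {e : α ≃ β // ∀ a, R a (e a)}
  set C := n.choose k
  set M := ∑ S ∈ powersetCard k (univ : Finset α), ∑ T ∈ powersetCard k (univ : Finset β),
    Nat.card (Matching R S T)
  have hsum : C * a ≤ (n - k)! * M := by
    calc C * a = ∑ _S ∈ powersetCard k (univ : Finset α), a := by simp [C, hα]
      _ ≤ ∑ S ∈ powersetCard k (univ : Finset α), (n - k)! *
            ∑ T ∈ powersetCard k (univ : Finset β), Nat.card (Matching R S T) :=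
        sum_le_sum fun S hS => mem_powersetCard_univ.1 hS ▸ card_relEquiv_le_sum R hα S
      _ = (n - k)! * M := (mul_sum ..).symm
  have hCS : M ^ 2 ≤ C ^ 2 * sqMatchingSum R k := by
    have := sq_sum_le_card_mul_sum_sq (s := powersetCard k (univ : Finset α) ×ˢ
      powersetCard k (univ : Finset β)) (f := fun p => Nat.card (Matching R p.1 p.2))
    rwa [sum_product, sum_product, card_product, card_powersetCard, card_powersetCard,
      Finset.card_univ, Finset.card_univ, hα, hβ, ← sq] at this
  refine Nat.le_of_mul_le_mul_left ?_ (pow_pos (choose_pos hk) 2 : 0 < C ^ 2)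
  calc C ^ 2 * a ^ 2 = (C * a) ^ 2 := by ring
    _ ≤ ((n - k)! * M) ^ 2 := Nat.pow_le_pow_left hsum 2
    _ = (n - k)! ^ 2 * M ^ 2 := by ring
    _ ≤ (n - k)! ^ 2 * (C ^ 2 * sqMatchingSum R k) := Nat.mul_le_mul_left _ hCS
    _ = C ^ 2 * ((n - k)! ^ 2 * sqMatchingSum R k) := by ring

end Count

noncomputable def sumInvFactorialSq (n : ℕ) : ℚ :=
  ∑ k ∈ range (n + 1), 1 / (k ! : ℚ) ^ 2

lemma mul_sumInvFactorialSq (x : ℚ) (n : ℕ) :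
    x * sumInvFactorialSq n = ∑ k ∈ range (n + 1), x / ((n - k)! : ℚ) ^ 2 := by
  rw [sumInvFactorialSq, mul_sum, ← sum_range_reflect]
  simp [div_eq_mul_inv]

section Ratio

variable [Fintype α] [Fintype β] {R : α → β → Prop} {n : ℕ}
  (hα : Fintype.card α = n) (hβ : Fintype.card β = n)
include hα hβ

lemma sq_card_relEquiv_div_le {k : ℕ} (hk : k ∈ range (n + 1)) :
    (Nat.card {e : α ≃ β // ∀ a, R a (e a)} : ℚ) ^ 2 / ((n - k)! : ℚ) ^ 2 ≤
      sqMatchingSum R k := by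
  rw [div_le_iff₀ (by positivity), mul_comm]
  exact_mod_cast sq_card_relEquiv_le R hα hβ (Nat.lt_succ_iff.1 (mem_range.1 hk))

theorem sq_card_relEquiv_mul_le :
    (Nat.card {e : α ≃ β // ∀ a, R a (e a)} : ℚ) ^ 2 * sumInvFactorialSq n ≤
      (∑ S : Finset α, ∑ T : Finset β, Nat.card (Matching R S T) ^ 2 : ℕ) := by
  rw [mul_sumInvFactorialSq, sum_sq_card_matching_eq R hα, Nat.cast_sum]
  exact sum_le_sum fun k hk => sq_card_relEquiv_div_le hα hβ hk

theorem sq_card_relEquiv_mul_lt {a : α} {b : β} (hab : ¬ R a b) :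
    (Nat.card {e : α ≃ β // ∀ a, R a (e a)} : ℚ) ^ 2 * sumInvFactorialSq n <
      (∑ S : Finset α, ∑ T : Finset β, Nat.card (Matching R S T) ^ 2 : ℕ) := by
  rw [mul_sumInvFactorialSq, sum_sq_card_matching_eq R hα, Nat.cast_sum]
  refine sum_lt_sum (fun k hk => sq_card_relEquiv_div_le hα hβ hk) ⟨0, by simp, ?_⟩
  have hcard : Nat.card α = Nat.card β := by simp [hα, hβ]
  rw [sqMatchingSum_zero, Nat.sub_zero, Nat.cast_one, div_lt_one (by positivity)]
  have := card_relEquiv_lt hcard hab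
  rw [Nat.card_eq_fintype_card (α := α), hα] at this
  exact_mod_cast Nat.pow_lt_pow_left this two_ne_zero

theorem sq_card_relEquiv_mul_eq (hR : ∀ a b, R a b) :
    (Nat.card {e : α ≃ β // ∀ a, R a (e a)} : ℚ) ^ 2 * sumInvFactorialSq n =
      (∑ S : Finset α, ∑ T : Finset β, Nat.card (Matching R S T) ^ 2 : ℕ) := by
  rw [mul_sumInvFactorialSq, sum_sq_card_matching_eq R hα, Nat.cast_sum,
    card_relEquiv_of_forall (by simp [hα, hβ]) hR, Nat.card_eq_fintype_card, hα]
  refine sum_congr rfl fun k hk => ?_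
  rw [sqMatchingSum_of_forall R hα hβ hR, div_eq_iff (by positivity),
    ← Nat.choose_mul_factorial_mul_factorial (Nat.lt_succ_iff.1 (mem_range.1 hk))]
  push_cast
  ring

end Ratio

theorem card_forall_adj_div_card_isPermOn [Fintype α] [Fintype β] {G : SimpleGraph (α ⊕ β)}
    (hG : G ≤ completeBipartiteGraph α β) {n : ℕ} (hα : Fintype.card α = n)
    (hβ : Fintype.card β = n) :
    ((Nat.card {σ : Perm (α ⊕ β) // ∀ v, G.Adj v (σ v)} : ℚ) /
        Nat.card {σ // IsPermOn G σ} ≤ (sumInvFactorialSq n)⁻¹) ∧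
      ((Nat.card {σ : Perm (α ⊕ β) // ∀ v, G.Adj v (σ v)} : ℚ) /
        Nat.card {σ // IsPermOn G σ} = (sumInvFactorialSq n)⁻¹ ↔
          ∀ a b, G.Adj (.inl a) (.inr b)) := by
  have hP : (0 : ℚ) < Nat.card {σ // IsPermOn G σ} := by
    have : Nonempty {σ // IsPermOn G σ} := ⟨⟨1, fun _ => .inl rfl⟩⟩
    exact_mod_cast Nat.card_pos
  have hE : 0 < sumInvFactorialSq n := by unfold sumInvFactorialSq; positivity
  rw [div_le_iff₀ hP, div_eq_iff hP.ne', inv_mul_eq_div, le_div_iff₀ hE, eq_div_iff hE.ne']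
  rw [card_forall_adj_eq_sq hG, card_isPermOn_eq_sum hG, Nat.cast_pow]
  refine ⟨sq_card_relEquiv_mul_le hα hβ, ⟨fun h => ?_, sq_card_relEquiv_mul_eq hα hβ⟩⟩
  by_contra! hne
  obtain ⟨a, b, hab⟩ := hne
  exact (sq_card_relEquiv_mul_lt hα hβ hab).ne h

end BipartitePerm

/-- For a balanced bipartite graph `G` on parts of size `n`, the derangement-to-permutation
ratio is at most `(∑_{k=0}^n 1/(k!)²)⁻¹`, with equality iff `G = K_{n,n}`. -/
theorem stmt_13 (n : ℕ) (G : SimpleGraph (Fin n ⊕ Fin n))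
    (hbip : ∀ v w, G.Adj v w →
      (∃ i j, v = Sum.inl i ∧ w = Sum.inr j) ∨ (∃ i j, v = Sum.inr i ∧ w = Sum.inl j)) :
    (({σ : Equiv.Perm (Fin n ⊕ Fin n) | ∀ v, G.Adj v (σ v)}.ncard : ℚ) /
        ({σ : Equiv.Perm (Fin n ⊕ Fin n) | ∀ v, σ v = v ∨ G.Adj v (σ v)}.ncard : ℚ) ≤
      (∑ k ∈ range (n + 1), (1 : ℚ) / (Nat.factorial k) ^ 2)⁻¹) ∧
    ((({σ : Equiv.Perm (Fin n ⊕ Fin n) | ∀ v, G.Adj v (σ v)}.ncard : ℚ) /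
        ({σ : Equiv.Perm (Fin n ⊕ Fin n) | ∀ v, σ v = v ∨ G.Adj v (σ v)}.ncard : ℚ) =
      (∑ k ∈ range (n + 1), (1 : ℚ) / (Nat.factorial k) ^ 2)⁻¹) ↔
      ∀ i j, G.Adj (Sum.inl i) (Sum.inr j)) := by
  have hG : G ≤ completeBipartiteGraph (Fin n) (Fin n) := fun v w h => by
    rcases hbip v w h with ⟨i, j, rfl, rfl⟩ | ⟨i, j, rfl, rfl⟩ <;> simp
  simp only [← Nat.card_coe_set_eq]
  exact BipartitePerm.card_forall_adj_div_card_isPermOn hG (Fintype.card_fin n)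
    (Fintype.card_fin n)
end

section
/- If G is an undirected bipartite graph, then the number of derangements on G equals the square of the number of perfect matchings of G. -/
/-!
Fix a proper colouring `c : V → Bool`. Every edge `{v, σ v}` of a derangement `σ` has exactly one
endpoint of each colour, so for each colour `b` the edges `{v, σ v}` with `c v = b` form a perfect
matching `M b`: at a vertex of colour `b` it is the edge towards `σ v`, at the other vertices the
edge towards `σ⁻¹ v`. Conversely `σ` is recovered from the pair of matchings by sending `v` to its
partner in `M (c v)`, and any two perfect matchings arise this way.
-/

open Equiv

namespace SimpleGraph

variable {V : Type*} {G : SimpleGraph V}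

theorem Coloring.eq_not_of_adj (c : G.Coloring Bool) {v w : V} (h : G.Adj v w) : c w = !c v :=
  Bool.eq_not.mpr (c.valid h).symm

namespace Subgraph.IsPerfectMatching

variable {M : G.Subgraph} (hM : M.IsPerfectMatching)

noncomputable def partner (v : V) : V :=
  (isPerfectMatching_iff.mp hM v).choose

theorem partner_eq_iff {v w : V} : hM.partner v = w ↔ M.Adj v w :=
  ⟨fun h ↦ h ▸ (isPerfectMatching_iff.mp hM v).choose_spec.1,
    fun h ↦ ((isPerfectMatching_iff.mp hM v).choose_spec.2 w h).symm⟩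

theorem adj_partner (v : V) : M.Adj v (hM.partner v) :=
  hM.partner_eq_iff.mp rfl

end Subgraph.IsPerfectMatching

namespace Coloring

variable (c : G.Coloring Bool)

theorem apply_partner {M : G.Subgraph} (hM : M.IsPerfectMatching) (v : V) :
    c (hM.partner v) = !c v :=
  c.eq_not_of_adj (hM.adj_partner v).adj_sub

def derangementMatching {σ : Perm V} (hσ : ∀ v, G.Adj v (σ v)) (b : Bool) : G.Subgraph where
  verts := Set.univ
  Adj v w := (c v = b ∧ σ v = w) ∨ (c w = b ∧ σ w = v)
  adj_sub := by
    rintro v w (⟨-, rfl⟩ | ⟨-, rfl⟩)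
    exacts [hσ v, (hσ w).symm]
  edge_vert _ := Set.mem_univ _
  symm := ⟨fun _ _ ↦ Or.symm⟩

theorem derangementMatching_adj_iff {σ : Perm V} (hσ : ∀ v, G.Adj v (σ v)) (b : Bool)
    {v w : V} :
    (c.derangementMatching hσ b).Adj v w ↔ w = if c v = b then σ v else σ.symm v := by
  change (c v = b ∧ σ v = w) ∨ (c w = b ∧ σ w = v) ↔ _
  by_cases hv : c v = b
  · have : σ w = v → c w ≠ b := fun h ↦ by
      rw [← hv, ← h, c.eq_not_of_adj (hσ w)]; exact (Bool.not_ne_self _).symm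
    rw [if_pos hv]
    grind
  · have : σ w = v → c w = b := fun h ↦ by
      rw [← h, c.eq_not_of_adj (hσ w)] at hv; simpa using hv
    rw [if_neg hv, σ.eq_symm_apply]
    grind

theorem isPerfectMatching_derangementMatching {σ : Perm V} (hσ : ∀ v, G.Adj v (σ v))
    (b : Bool) : (c.derangementMatching hσ b).IsPerfectMatching :=
  Subgraph.isPerfectMatching_iff.mpr fun _ ↦
    ⟨_, (c.derangementMatching_adj_iff hσ b).mpr rfl,
      fun _ h ↦ (c.derangementMatching_adj_iff hσ b).mp h⟩

noncomputable def permOfMatchings (M : Bool → {M : G.Subgraph // M.IsPerfectMatching}) :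
    Perm V where
  toFun v := (M (c v)).2.partner v
  invFun v := (M (!c v)).2.partner v
  left_inv v := by
    dsimp only
    rw [Subgraph.IsPerfectMatching.partner_eq_iff, c.apply_partner, Bool.not_not]
    exact ((M (c v)).2.adj_partner v).symm
  right_inv v := by
    dsimp only
    rw [Subgraph.IsPerfectMatching.partner_eq_iff, c.apply_partner]
    exact ((M (!c v)).2.adj_partner v).symm

theorem adj_permOfMatchings (M : Bool → {M : G.Subgraph // M.IsPerfectMatching}) (v : V) :
    G.Adj v (c.permOfMatchings M v) :=
  ((M (c v)).2.adj_partner v).adj_sub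

theorem derangementMatching_permOfMatchings
    (M : Bool → {M : G.Subgraph // M.IsPerfectMatching}) (b : Bool) :
    c.derangementMatching (c.adj_permOfMatchings M) b = M b := by
  refine Subgraph.ext (Subgraph.isSpanning_iff.mp (M b).2.2).symm ?_
  ext v w
  rw [derangementMatching_adj_iff, eq_comm]
  by_cases hv : c v = b
  · subst hv
    rw [if_pos rfl]
    exact (M (c v)).2.partner_eq_iff
  · obtain rfl : b = !c v := Bool.eq_not.mpr (Ne.symm hv)
    rw [if_neg hv]
    exact (M (!c v)).2.partner_eq_iff

noncomputable def derangementEquiv :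
    {σ : Perm V // ∀ v, G.Adj v (σ v)} ≃ (Bool → {M : G.Subgraph // M.IsPerfectMatching}) where
  toFun σ b := ⟨c.derangementMatching σ.2 b, c.isPerfectMatching_derangementMatching σ.2 b⟩
  invFun M := ⟨c.permOfMatchings M, c.adj_permOfMatchings M⟩
  left_inv σ := Subtype.ext <| Perm.ext fun v ↦
    (c.isPerfectMatching_derangementMatching σ.2 (c v)).partner_eq_iff.mpr
      ((c.derangementMatching_adj_iff σ.2 _).mpr (if_pos rfl).symm)
  right_inv M := funext fun b ↦ Subtype.ext (c.derangementMatching_permOfMatchings M b)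

end Coloring

end SimpleGraph

theorem stmt_14_general {V : Type*} (G : SimpleGraph V) (hbip : G.Colorable 2) :
    {σ : Equiv.Perm V | ∀ v, G.Adj v (σ v)}.ncard =
      {M : G.Subgraph | M.IsPerfectMatching}.ncard ^ 2 := by
  obtain ⟨c⟩ := hbip
  calc {σ : Equiv.Perm V | ∀ v, G.Adj v (σ v)}.ncard
      = Nat.card (Bool → {M : G.Subgraph // M.IsPerfectMatching}) :=
        (Nat.card_coe_set_eq _).symm.trans
          (Nat.card_congr (G.recolorOfEquiv finTwoEquiv c).derangementEquiv)
    _ = {M : G.Subgraph | M.IsPerfectMatching}.ncard ^ 2 := by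
      rw [Nat.card_fun, Nat.card_eq_fintype_card (α := Bool), Fintype.card_bool]; rfl

/-- For an undirected bipartite graph, the number of derangements on the graph equals the
square of the number of perfect matchings. -/
theorem stmt_14 {V : Type*} [Fintype V] (G : SimpleGraph V) (hbip : G.Colorable 2) :
    {σ : Equiv.Perm V | ∀ v, G.Adj v (σ v)}.ncard =
      {M : G.Subgraph | M.IsPerfectMatching}.ncard ^ 2 :=
  stmt_14_general G hbip
end

section
/- If a Hamilton cycle C of a loopless directed graph G has no forward chords with respect to a fixed vertex v0, then C is the unique Hamilton cycle of G. -/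
/-- If a Hamilton cycle `c` of a loopless digraph has no forward chords with respect to a
vertex `v0` (a chord `(x,y)` is forward when `v0` lies on the segment of `c` from `y` to `x`,
i.e. the cycle formed by the chord together with edges of `c` contains `v0`), then `c` is the
unique Hamilton cycle of the digraph. -/
theorem stmt_17 {V : Type*} [Fintype V] (E : V → V → Prop) (hE : Irreflexive E)
    (c : Equiv.Perm V) (hc : c.IsCycle) (hcE : ∀ w, E w (c w)) (v0 : V)
    (hno : ¬ ∃ x y, E x y ∧ y ≠ c x ∧
      ∃ j k : ℕ, (c ^ j) y = v0 ∧ (c ^ k) v0 = x ∧ j + k < Fintype.card V) :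
    ∀ c' : Equiv.Perm V, c'.IsCycle → (∀ w, E w (c' w)) → c' = c := by
  classical
  intro c' _hc' hcE'
  push_neg at hno
  set n := Fintype.card V with hn
  have hfix : ∀ w, c w ≠ w := by
    intro w h
    have := hcE w
    rw [h] at this
    exact hE w this
  have hnpos : 0 < n := Fintype.card_pos_iff.mpr ⟨v0⟩
  have hsupp : c.support = Finset.univ := by
    ext w; simp [Equiv.Perm.mem_support, hfix w]
  have hord : orderOf c = n := by
    rw [hc.orderOf, hsupp, Finset.card_univ]
  have hcn : c ^ n = 1 := by rw [← hord]; exact pow_orderOf_eq_one c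
  -- injectivity of indices
  have hEq : ∀ a b : ℕ, a < n → b < n → (c ^ a) v0 = (c ^ b) v0 → a = b := by
    have key : ∀ a b : ℕ, a ≤ b → b < n → (c ^ a) v0 = (c ^ b) v0 → a = b := by
      intro a b hab hbn h
      have h1 : (c ^ (b - a)) ((c ^ a) v0) = (c ^ a) v0 := by
        rw [← Equiv.Perm.mul_apply, ← pow_add, Nat.sub_add_cancel hab, ← h]
      have h2 : c ^ (b - a) = 1 :=
        (hc.pow_eq_one_iff' (hfix ((c ^ a) v0))).mpr h1
      have h3 : n ∣ b - a := hord ▸ orderOf_dvd_of_pow_eq_one h2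
      have h4 : b - a = 0 := Nat.eq_zero_of_dvd_of_lt h3 (by omega)
      omega
    intro a b ha hb h
    rcases le_total a b with hab | hab
    · exact key a b hab hb h
    · exact (key b a hab ha h.symm).symm
    -- done
  -- existence of indices
  have hex : ∀ v : V, ∃ k < n, (c ^ k) v0 = v := by
    intro v
    obtain ⟨i, hi⟩ := hc.exists_pow_eq (hfix v0) (hfix v)
    refine ⟨i % n, Nat.mod_lt _ hnpos, ?_⟩
    rw [← hord, pow_mod_orderOf, hi]
  -- chord property : every chord goes strictly backwards and avoids v0
  have hkey : ∀ (x : V) (a b : ℕ), a < n → b < n → E x ((c ^ b) v0) →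
      (c ^ b) v0 ≠ c x → (c ^ a) v0 = x → b ≠ 0 ∧ b ≤ a := by
    intro x a b ha hb hxy hch hxa
    constructor
    · intro hb0
      subst hb0
      have := hno x ((c ^ 0) v0) hxy hch 0 a (by simp) hxa
      omega
    · by_contra hba
      push_neg at hba
      have hj : (c ^ (n - b)) ((c ^ b) v0) = v0 := by
        rw [← Equiv.Perm.mul_apply, ← pow_add, Nat.sub_add_cancel hb.le, hcn]
        rfl
      have := hno x ((c ^ b) v0) hxy hch (n - b) a hj hxa
      omega
  -- main downward induction
  have main : ∀ d, d < n → c' ((c ^ (n - 1 - d)) v0) = (c ^ (n - d)) v0 := by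
    intro d
    induction d using Nat.strong_induction_on with
    | _ d IH =>
      intro hd
      set y : V := (c ^ (n - d)) v0 with hy
      set w : V := c'.symm y with hw
      have hcw : c' w = y := c'.apply_symm_apply y
      have hEwy : E w y := by rw [← hcw]; exact hcE' w
      by_cases hcase : y = c w
      · -- cycle edge: w = c ^ (n-1-d) v0
        have : c ((c ^ (n - 1 - d)) v0) = y := by
          rw [hy, ← Equiv.Perm.mul_apply, ← pow_succ']
          congr 2
          omega
        have hw' : w = (c ^ (n - 1 - d)) v0 := by
          apply c.injective
          rw [← hcase, this]
        rw [← hw']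
        exact hcw
      · -- chord: derive contradiction
        exfalso
        obtain ⟨t, htn, htw⟩ := hex w
        rcases Nat.eq_zero_or_pos d with hd0 | hdpos
        · -- d = 0 : y = v0, chord into v0, impossible
          have hy0 : y = (c ^ 0) v0 := by
            rw [hy, hd0, Nat.sub_zero, hcn]; rfl
          have := hkey w t 0 htn hnpos (hy0 ▸ hEwy) (hy0 ▸ hcase) htw
          exact this.1 rfl
        · have hndlt : n - d < n := by omega
          have hb := hkey w t (n - d) htn hndlt hEwy hcase htw
          have htne : t ≠ n - d := by
            intro h
            apply hE w
            have : y = w := by rw [hy, ← h, htw]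
            rw [← this] at hEwy ⊢
            exact hEwy
          have htgt : n - d < t := by omega
          -- apply IH at d' = n - 1 - t
          have hd' : n - 1 - t < d := by omega
          have hIH := IH (n - 1 - t) hd' (by omega)
          have ht1 : n - 1 - (n - 1 - t) = t := by omega
          rw [ht1] at hIH
          have ht2 : n - (n - 1 - t) = t + 1 := by omega
          rw [htw, hcw, ht2] at hIH
          rw [hy] at hIH
          rcases Nat.lt_or_ge (t + 1) n with h1 | h1
          · have := hEq (n - d) (t + 1) hndlt h1 hIH
            omega
          · have ht3 : t + 1 = n := by omega
            rw [ht3, hcn] at hIH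
            have : n - d = 0 := hEq (n - d) 0 hndlt hnpos (by simpa using hIH)
            omega
  -- conclude
  ext v
  obtain ⟨k, hk, hkv⟩ := hex v
  have := main (n - 1 - k) (by omega)
  have h1 : n - 1 - (n - 1 - k) = k := by omega
  have h2 : n - (n - 1 - k) = k + 1 := by omega
  rw [h1, h2, hkv] at this
  rw [this, ← hkv, ← Equiv.Perm.mul_apply, ← pow_succ']
end

section
/- For n ≥ 2, the ratio of derangements to permutations on the complete bipartite graph K_{n,n} is strictly greater than the ratio of derangements to permutations on the complete graph K_{2n}; equivalently, (Σ_{k=0}^{n} 1/(k!)^2)^{-1} > D_{2n}/(Σ_{k=0}^{2n} C(2n,k)·D_k), where D_m is the number of derangements of an m-element set. -/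
/-!
Sorting the permutations of a `2n`-set by their set of moved points shows that the denominator
`∑ C(2n,k) D_k` is `(2n)!`. The recurrence `D_{m+2} = (m+1)(D_m + D_{m+1})` propagates
`D_m ≤ (3/8) m!` from `m = 3, 4` to all `m ≥ 3`, while `(k+1)!² ≥ 4^k` bounds
`∑ 1/(k!)²` by `1 + ∑ 4^{-k} = 7/3`: the left side is at most `3/8`, the right side at least `3/7`.
-/
open Finset Equiv Function
open scoped Nat

theorem card_perm_eq_sum_card_derangements (α : Type*) [Fintype α] [DecidableEq α] :
    Fintype.card (Perm α) = ∑ s : Finset α, Fintype.card (derangements s) := by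
  rw [← Fintype.card_sigma]
  refine Fintype.card_congr ((Equiv.sigmaFiberEquiv Perm.support).symm.trans
    (Equiv.sigmaCongrRight fun s => ?_))
  refine (Equiv.subtypeEquivRight fun f => ?_).trans (derangements.subtypeEquiv (· ∈ s)).symm
  simp [Finset.ext_iff, Perm.mem_support, not_iff_comm, IsFixedPt]

theorem sum_choose_mul_numDerangements (n : ℕ) :
    ∑ k ∈ range (n + 1), n.choose k * numDerangements k = n ! := by
  have := card_perm_eq_sum_card_derangements (Fin n)
  simp only [Fintype.card_perm, Fintype.card_fin, card_derangements_eq_numDerangements,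
    Fintype.card_coe] at this
  rw [this, ← Finset.powerset_univ, Finset.sum_powerset_apply_card, Finset.card_univ,
    Fintype.card_fin]
  simp

theorem numDerangements_le_factorial (n : ℕ) (hn : 3 ≤ n) : 8 * numDerangements n ≤ 3 * n ! := by
  suffices ∀ k, 8 * numDerangements (k + 3) ≤ 3 * (k + 3)! ∧
      8 * numDerangements (k + 4) ≤ 3 * (k + 4)! by
    simpa [Nat.sub_add_cancel hn] using (this (n - 3)).1
  intro k
  induction k with
  | zero => decide
  | succ k ih =>
    refine ⟨ih.2, ?_⟩
    calc 8 * numDerangements (k + 5)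
        = (k + 4) * (8 * numDerangements (k + 3) + 8 * numDerangements (k + 4)) := by
          rw [numDerangements_add_two]; ring
      _ ≤ (k + 4) * (3 * (k + 3)! + 3 * (k + 4)!) := Nat.mul_le_mul_left _ (add_le_add ih.1 ih.2)
      _ = 3 * (k + 5)! := by
          rw [Nat.factorial_succ (k + 4), Nat.factorial_succ (k + 3)]; ring

theorem four_pow_le_factorial_succ_sq (n : ℕ) : 4 ^ n ≤ (n + 1)! ^ 2 := by
  induction n with
  | zero => simp
  | succ n ih =>
    rw [Nat.factorial_succ, mul_pow, pow_succ, mul_comm]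
    exact Nat.mul_le_mul (Nat.pow_le_pow_left (by omega : 2 ≤ n + 1 + 1) 2) ih

theorem sum_inv_factorial_sq_le (n : ℕ) :
    ∑ k ∈ range (n + 1), (1 : ℚ) / (k ! : ℚ) ^ 2 ≤ 7 / 3 := by
  have hterm (k : ℕ) : (1 : ℚ) / ((k + 1)! : ℚ) ^ 2 ≤ (1 / 4) ^ k := by
    rw [one_div_pow, one_div_le_one_div (by positivity) (by positivity)]
    exact_mod_cast four_pow_le_factorial_succ_sq k
  have hgeom : ∑ k ∈ range n, ((1 : ℚ) / 4) ^ k ≤ 4 / 3 := by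
    rw [Finset.range_eq_Ico]
    exact (geom_sum_Ico_le_of_lt_one (by norm_num) (by norm_num)).trans_eq (by norm_num)
  rw [sum_range_succ']
  have := (sum_le_sum fun k _ => hterm k).trans hgeom
  norm_num at this ⊢
  linarith

/-- `(d/p)_{K_{n,n}} > (d/p)_{K_{2n}}` for `n ≥ 2`, in the equivalent numerical form
`(∑_{k=0}^n 1/(k!)²)⁻¹ > D_{2n} / ∑_{k=0}^{2n} C(2n,k) D_k`. -/
theorem stmt_18 (n : ℕ) (hn : 2 ≤ n) :
    ((numDerangements (2 * n) : ℚ) /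
        ∑ k ∈ Finset.range (2 * n + 1), ((2 * n).choose k * numDerangements k : ℚ)) <
      (∑ k ∈ Finset.range (n + 1), (1 : ℚ) / (Nat.factorial k) ^ 2)⁻¹ := by
  have hsum : ∑ k ∈ range (2 * n + 1), ((2 * n).choose k * numDerangements k : ℚ) = (2 * n)! := by
    exact_mod_cast sum_choose_mul_numDerangements (2 * n)
  have hD : (8 : ℚ) * numDerangements (2 * n) ≤ 3 * (2 * n)! := by
    exact_mod_cast numDerangements_le_factorial (2 * n) (by omega)
  have hT := sum_inv_factorial_sq_le n
  have hT0 : 0 < ∑ k ∈ range (n + 1), (1 : ℚ) / (k ! : ℚ) ^ 2 :=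
    sum_pos (fun k _ => by positivity) nonempty_range_add_one
  have hF : (0 : ℚ) < (2 * n)! := by positivity
  rw [hsum, div_lt_iff₀ hF, ← div_eq_inv_mul, lt_div_iff₀ hT0]
  calc (numDerangements (2 * n) : ℚ) * ∑ k ∈ range (n + 1), (1 : ℚ) / (k ! : ℚ) ^ 2
      ≤ (3 / 8 * (2 * n)!) * (7 / 3) := by gcongr; linarith
    _ < (2 * n)! := by linarith
end
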